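/- arXiv:2601.10899 — 6 statements merged into one kernel-verified Lean document; each statement's English description precedes it below -/
import Mathlib

section
/- Let Z₁, …, Zₙ be square-integrable real random variables on a common probability space, and suppose the number of correlated pairs — ordered pairs (i, j) with i ≠ j and Cov(Zᵢ, Zⱼ) ≠ 0 — is at most K. Then for every nonempty subset S ⊆ {1, …, n} with |S| = m, Var((1/m) · Σ_{i∈S} Zᵢ) ≤ ((m + K)/m²) · max_{1≤i≤n} Var(Zᵢ). (Lemma 2, variance bound for the split-sample empirical mean under limited correlation; proved via Bienaymé's identity and the Cauchy–Schwarz bound |Cov(Zᵢ, Zⱼ)| ≤ √(Var Zᵢ) · √(Var Zⱼ).) -/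
/-!
STATEMENT 1 (Lemma 2, variance bound for the split-sample empirical mean under
limited correlation):  Z₁, …, Zₙ square-integrable real random variables whose
number of correlated ordered pairs (i ≠ j with Cov(Zᵢ, Zⱼ) ≠ 0) is at most K.
Then for every nonempty S ⊆ {1, …, n} with |S| = m,
Var((1/m) · Σ_{i∈S} Zᵢ) ≤ ((m + K)/m²) · max_i Var(Zᵢ).
-/

open MeasureTheory ProbabilityTheory

/-- The covariance of two real random variables. -/
noncomputable def covar {Ω : Type*} [MeasurableSpace Ω] (P : Measure Ω)
    (X Y : Ω → ℝ) : ℝ :=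
  ∫ ω, (X ω - ∫ a, X a ∂P) * (Y ω - ∫ a, Y a ∂P) ∂P

theorem variance_bound_split_sample_mean_limited_correlation
    {Ω : Type*} [MeasurableSpace Ω] {P : Measure Ω} [IsProbabilityMeasure P]
    {n : ℕ} (Z : Fin n → Ω → ℝ)
    (hZ : ∀ i, MemLp (Z i) 2 P)
    (K : ℕ)
    (hK : Set.ncard {p : Fin n × Fin n |
        p.1 ≠ p.2 ∧ covar P (Z p.1) (Z p.2) ≠ 0} ≤ K)
    (S : Finset (Fin n)) (hS : S.Nonempty) (m : ℕ) (hm : S.card = m) :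
    variance (fun ω => (m : ℝ)⁻¹ * ∑ i ∈ S, Z i ω) P
      ≤ ((m + K : ℝ) / (m : ℝ) ^ 2) * ⨆ i, variance (Z i) P := by
  classical
  obtain ⟨i0, hi0⟩ := hS
  set V := ⨆ i, variance (Z i) P with hVdef
  have hVle : ∀ i, variance (Z i) P ≤ V := fun i => by
    rw [hVdef]
    exact le_ciSup (Set.Finite.bddAbove
      (Set.finite_range fun j => variance (Z j) P)) i
  have hV0 : 0 ≤ V := le_trans (variance_nonneg (Z i0) P) (hVle i0)
  have hm0 : 0 < m := hm ▸ Finset.card_pos.mpr ⟨i0, hi0⟩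
  have hmR : (0 : ℝ) < m := by exact_mod_cast hm0
  -- centered variables
  set f : Fin n → Ω → ℝ := fun i ω => Z i ω - ∫ a, Z i a ∂P with hfdef
  have hfL2 : ∀ i, MemLp (f i) 2 P := fun i => (hZ i).sub (memLp_const _)
  have hint : ∀ i j, Integrable (fun ω => f i ω * f j ω) P := by
    intro i j
    rw [← memLp_one_iff_integrable]
    have := (hfL2 j).smul (r := 1) (hfL2 i)
      (hpqr := ⟨by simp [ENNReal.inv_two_add_inv_two]⟩)
    simpa [smul_eq_mul, Pi.mul_def] using this
  have hvar : ∀ i, variance (Z i) P = ∫ ω, f i ω * f i ω ∂P := by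
    intro i
    rw [variance_eq_integral (hZ i).aemeasurable]
    congr 1 with ω
    simp [hfdef, sq]
  have hcov : ∀ i j, covar P (Z i) (Z j) = ∫ ω, f i ω * f j ω ∂P := fun i j => rfl
  -- covariance bound
  have hcovle : ∀ i j, covar P (Z i) (Z j) ≤ V := by
    intro i j
    have h1 : covar P (Z i) (Z j)
        ≤ ∫ ω, (f i ω * f i ω + f j ω * f j ω) / 2 ∂P := by
      rw [hcov]
      apply integral_mono (hint i j) (((hint i i).add (hint j j)).div_const 2)
      intro ω
      simp only [Pi.add_apply]
      generalize f i ω = a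
      generalize f j ω = b
      nlinarith [mul_self_nonneg (a - b)]
    have h2 : ∫ ω, (f i ω * f i ω + f j ω * f j ω) / 2 ∂P
        = (variance (Z i) P + variance (Z j) P) / 2 := by
      rw [hvar, hvar, ← integral_add (hint i i) (hint j j), ← integral_div]
    rw [h2] at h1
    have := hVle i; have := hVle j
    linarith
  -- variance of sum as double sum of covariances
  have hsum2 : MemLp (fun ω => ∑ i ∈ S, Z i ω) 2 P := by
    have h := memLp_finset_sum' (μ := P) S (fun i (_ : i ∈ S) => hZ i)
    have heq : (fun ω => ∑ i ∈ S, Z i ω) = ∑ i ∈ S, Z i := by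
      funext ω; simp
    rw [heq]; exact h
  have hEsum : ∫ ω, ∑ i ∈ S, Z i ω ∂P = ∑ i ∈ S, ∫ a, Z i a ∂P :=
    integral_finset_sum S (fun i _ => (hZ i).integrable one_le_two)
  have hVarSum : variance (fun ω => ∑ i ∈ S, Z i ω) P
      = ∑ p ∈ S ×ˢ S, covar P (Z p.1) (Z p.2) := by
    simp only [hcov]
    rw [variance_eq_integral hsum2.aemeasurable, ← integral_finset_sum _ (fun p _ => hint p.1 p.2)]
    apply integral_congr_ae
    filter_upwards with ω
    simp only [Pi.pow_apply, Pi.sub_apply, hEsum, ← Finset.sum_sub_distrib, sq]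
    rw [Finset.sum_mul_sum, ← Finset.sum_product']
  -- split into diagonal and off-diagonal
  have hsplit : ∑ p ∈ S ×ˢ S, covar P (Z p.1) (Z p.2)
      = ∑ p ∈ S.diag, covar P (Z p.1) (Z p.2)
        + ∑ p ∈ S.offDiag, covar P (Z p.1) (Z p.2) := by
    rw [← Finset.sum_union (Finset.disjoint_diag_offDiag S), Finset.diag_union_offDiag]
  have hdiag : ∑ p ∈ S.diag, covar P (Z p.1) (Z p.2) ≤ (m : ℝ) * V := by
    calc ∑ p ∈ S.diag, covar P (Z p.1) (Z p.2)
        ≤ ∑ _p ∈ S.diag, V := by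
          apply Finset.sum_le_sum
          intro p hp
          exact hcovle p.1 p.2
      _ = (m : ℝ) * V := by
          rw [Finset.sum_const, Finset.diag_card, hm, nsmul_eq_mul]
  -- off-diagonal: only nonzero covariances matter
  have hoff : ∑ p ∈ S.offDiag, covar P (Z p.1) (Z p.2) ≤ (K : ℝ) * V := by
    set T := S.offDiag.filter (fun p => covar P (Z p.1) (Z p.2) ≠ 0) with hT
    have hsumT : ∑ p ∈ S.offDiag, covar P (Z p.1) (Z p.2)
        = ∑ p ∈ T, covar P (Z p.1) (Z p.2) :=
      (Finset.sum_filter_of_ne (fun p _ h => h)).symm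
    have hTcard : T.card ≤ K := by
      have hsub : (↑T : Set (Fin n × Fin n)) ⊆
          {p : Fin n × Fin n | p.1 ≠ p.2 ∧ covar P (Z p.1) (Z p.2) ≠ 0} := by
        intro p hp
        simp only [hT, Finset.coe_filter, Set.mem_setOf_eq, Finset.mem_offDiag] at hp
        exact ⟨hp.1.2.2, hp.2⟩
      calc T.card = (↑T : Set (Fin n × Fin n)).ncard := (Set.ncard_coe_finset T).symm
        _ ≤ Set.ncard {p : Fin n × Fin n | p.1 ≠ p.2 ∧ covar P (Z p.1) (Z p.2) ≠ 0} :=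
            Set.ncard_le_ncard hsub (Set.toFinite _)
        _ ≤ K := hK
    calc ∑ p ∈ S.offDiag, covar P (Z p.1) (Z p.2)
        = ∑ p ∈ T, covar P (Z p.1) (Z p.2) := hsumT
      _ ≤ ∑ _p ∈ T, V := Finset.sum_le_sum (fun p _ => hcovle p.1 p.2)
      _ = (T.card : ℝ) * V := by rw [Finset.sum_const, nsmul_eq_mul]
      _ ≤ (K : ℝ) * V := by
          apply mul_le_mul_of_nonneg_right _ hV0
          exact_mod_cast hTcard
  -- conclude
  have hVarSumLe : variance (fun ω => ∑ i ∈ S, Z i ω) P ≤ ((m : ℝ) + K) * V := by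
    rw [hVarSum, hsplit]; linarith
  calc variance (fun ω => (m : ℝ)⁻¹ * ∑ i ∈ S, Z i ω) P
      = (m : ℝ)⁻¹ ^ 2 * variance (fun ω => ∑ i ∈ S, Z i ω) P :=
        variance_const_mul _ _ _
    _ ≤ (m : ℝ)⁻¹ ^ 2 * (((m : ℝ) + K) * V) := by
        apply mul_le_mul_of_nonneg_left hVarSumLe (by positivity)
    _ = ((m + K : ℝ) / (m : ℝ) ^ 2) * V := by
        field_simp
end

section
/- Let Z₁, …, Zₙ be square-integrable real random variables on a common probability space with common mean E[Zᵢ] = μ for all i, and suppose the number of correlated pairs — ordered pairs (i, j) with i ≠ j and Cov(Zᵢ, Zⱼ) ≠ 0 — is at most K. Let S be a random subset of {1, …, n} of fixed size m ≥ 1 that is independent of (Z₁, …, Zₙ). Then Var((1/m) · Σ_{i∈S} Zᵢ) ≤ ((m + K)/m²) · max_{1≤i≤n} Var(Zᵢ). (Lemma 2 stated for the random as-independent holdout fold: since the conditional mean given S equals μ for every realization of S, the law of total variance reduces the claim to the fixed-subset bound.) -/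
/-!
STATEMENT 2 (Lemma 2 for the random as-independent holdout fold):
Z₁, …, Zₙ square-integrable with common mean μ, at most K correlated ordered
pairs; S a random subset of {1, …, n} of fixed size m ≥ 1 independent of the
vector (Z₁, …, Zₙ).  Then
Var((1/m) · Σ_{i∈S} Zᵢ) ≤ ((m + K)/m²) · max_i Var(Zᵢ).
-/

open MeasureTheory ProbabilityTheory

/-- A (finite, hence discrete) measurable-space structure on `Finset α`. -/
instance Finset.instMeasurableSpace' {α : Type*} : MeasurableSpace (Finset α) := ⊤

/-- Auxiliary: the indicator of the event `{ω | S ω = s}`. -/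
noncomputable def gI {Ω : Type*} {n : ℕ} (S : Ω → Finset (Fin n))
    (s : Finset (Fin n)) (ω : Ω) : ℝ :=
  if S ω = s then 1 else 0

/-- Auxiliary: the empirical mean over a fixed subset `s`, scaled by `1/m`. -/
noncomputable def WA {Ω : Type*} {n : ℕ} (Z : Fin n → Ω → ℝ) (m : ℕ)
    (s : Finset (Fin n)) (ω : Ω) : ℝ :=
  (m : ℝ)⁻¹ * ∑ i ∈ s, Z i ω

theorem variance_bound_random_as_independent_holdout
    {Ω : Type*} [MeasurableSpace Ω] {P : Measure Ω} [IsProbabilityMeasure P]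
    {n : ℕ} (Z : Fin n → Ω → ℝ)
    (hZmeas : ∀ i, Measurable (Z i))
    (hZ : ∀ i, MemLp (Z i) 2 P)
    (μ : ℝ) (hmean : ∀ i, ∫ ω, Z i ω ∂P = μ)
    (K : ℕ)
    (hK : Set.ncard {p : Fin n × Fin n |
        p.1 ≠ p.2 ∧ covar P (Z p.1) (Z p.2) ≠ 0} ≤ K)
    (m : ℕ) (hm : 1 ≤ m)
    (S : Ω → Finset (Fin n)) (hSmeas : Measurable S)
    (hScard : ∀ ω, (S ω).card = m)
    (hSindep : IndepFun S (fun ω i => Z i ω) P) :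
    variance (fun ω => (m : ℝ)⁻¹ * ∑ i ∈ S ω, Z i ω) P
      ≤ ((m + K : ℝ) / (m : ℝ) ^ 2) * ⨆ i, variance (Z i) P := by
  classical
  -- Ω is nonempty
  have hΩ : Nonempty Ω := by
    by_contra h
    rw [not_nonempty_iff] at h
    have h1 : P Set.univ = 1 := measure_univ
    rw [Set.univ_eq_empty_iff.mpr h, measure_empty] at h1
    exact zero_ne_one h1
  obtain ⟨ω₀⟩ := hΩ
  have hn : Nonempty (Fin n) := by
    have h1 : 0 < (S ω₀).card := by rw [hScard]; exact hm
    obtain ⟨i, _⟩ := Finset.card_pos.mp h1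
    exact ⟨i⟩
  have hm0 : (0:ℝ) < m := by exact_mod_cast Nat.lt_of_lt_of_le Nat.zero_lt_one hm
  set V : ℝ := ⨆ i, variance (Z i) P with hVdef
  have hVar_le : ∀ i, variance (Z i) P ≤ V :=
    fun i => le_ciSup (f := fun i => variance (Z i) P)
      (Set.Finite.bddAbove (Set.finite_range _)) i
  have hV0 : 0 ≤ V := le_trans (variance_nonneg _ _) (hVar_le (Classical.arbitrary _))
  -- variance and covariance formulas
  have hvar : ∀ i, variance (Z i) P = ∫ ω, (Z i ω - μ)^2 ∂P := by
    intro i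
    rw [show variance (Z i) P = ∫ ω, ((Z i - fun _ => ∫ a, Z i a ∂P) ^ (2:ℕ) : Ω → ℝ) ω ∂P from
      variance_eq_integral (hZ i).aestronglyMeasurable.aemeasurable, hmean i]
    rfl
  have hcovar : ∀ i j, covar P (Z i) (Z j) = ∫ ω, (Z i ω - μ) * (Z j ω - μ) ∂P := by
    intro i j; unfold covar; rw [hmean i, hmean j]
  have hYmem : ∀ i, MemLp (fun ω => Z i ω - μ) 2 P :=
    fun i => (hZ i).sub (memLp_const μ)
  have hYint : ∀ i j, Integrable (fun ω => (Z i ω - μ) * (Z j ω - μ)) P := by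
    intro i j
    have h := ((hYmem j).smul (hYmem i)
      (p := (2:ENNReal)) (q := (2:ENNReal)) (r := 1))
    rw [memLp_one_iff_integrable] at h
    exact h
  have hsq_int : ∀ i, Integrable (fun ω => (Z i ω - μ)^2) P :=
    fun i => (hYmem i).integrable_sq
  -- each covariance is at most V
  have hcov_le : ∀ i j, covar P (Z i) (Z j) ≤ V := by
    intro i j
    rw [hcovar]
    have hmono : ∫ ω, (Z i ω - μ) * (Z j ω - μ) ∂P
        ≤ ∫ ω, ((Z i ω - μ)^2 + (Z j ω - μ)^2)/2 ∂P := by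
      apply integral_mono (hYint i j)
      · exact (((hsq_int i).add (hsq_int j)).div_const 2)
      · intro ω
        simp only [Pi.add_apply]
        nlinarith [sq_nonneg (Z i ω - μ - (Z j ω - μ))]
    have heq : ∫ ω, ((Z i ω - μ)^2 + (Z j ω - μ)^2)/2 ∂P
        = (variance (Z i) P + variance (Z j) P)/2 := by
      rw [integral_div, integral_add (hsq_int i) (hsq_int j), hvar i, hvar j]
    have := hVar_le i
    have := hVar_le j
    linarith
  -- the set of correlated pairs as a finset
  set T : Finset (Fin n × Fin n) :=
    Finset.univ.filter (fun p => p.1 ≠ p.2 ∧ covar P (Z p.1) (Z p.2) ≠ 0) with hT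
  have hTK : T.card ≤ K := by
    have hset : {p : Fin n × Fin n | p.1 ≠ p.2 ∧ covar P (Z p.1) (Z p.2) ≠ 0} = ↑T := by
      ext p; simp [hT]
    rwa [hset, Set.ncard_coe_finset] at hK
  -- covariance-sum bound for a fixed subset s of cardinality m
  have hsum_bound : ∀ s : Finset (Fin n), s.card = m →
      ∑ p ∈ s ×ˢ s, covar P (Z p.1) (Z p.2) ≤ (m + K : ℝ) * V := by
    intro s hs
    rw [← Finset.sum_filter_add_sum_filter_not (s ×ˢ s) (fun p => p.1 = p.2)]
    have hDcard : ((s ×ˢ s).filter (fun p => p.1 = p.2)).card ≤ m := by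
      rw [← hs]
      apply Finset.card_le_card_of_injOn (fun p => p.1)
      · intro p hp
        simp only [Finset.mem_coe, Finset.mem_filter, Finset.mem_product] at hp
        exact hp.1.1
      · intro p hp q hq hpq
        have hpq' : p.1 = q.1 := hpq
        simp only [Finset.coe_filter, Set.mem_setOf_eq, Finset.mem_product] at hp hq
        exact Prod.ext hpq' (by rw [← hp.2, ← hq.2, hpq'])
    have h1 : ∑ p ∈ (s ×ˢ s).filter (fun p => p.1 = p.2), covar P (Z p.1) (Z p.2)
        ≤ (m : ℝ) * V := by
      calc ∑ p ∈ (s ×ˢ s).filter (fun p => p.1 = p.2), covar P (Z p.1) (Z p.2)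
          ≤ ((s ×ˢ s).filter (fun p => p.1 = p.2)).card • V :=
            Finset.sum_le_card_nsmul _ _ _ (fun p _ => hcov_le p.1 p.2)
        _ ≤ (m : ℝ) * V := by
            rw [nsmul_eq_mul]
            exact mul_le_mul_of_nonneg_right (by exact_mod_cast hDcard) hV0
    have h2 : ∑ p ∈ (s ×ˢ s).filter (fun p => ¬ p.1 = p.2), covar P (Z p.1) (Z p.2)
        ≤ (K : ℝ) * V := by
      set A := (s ×ˢ s).filter (fun p => ¬ p.1 = p.2) with hA
      rw [← Finset.sum_filter_ne_zero A (f := fun p => covar P (Z p.1) (Z p.2))]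
      have hsub : A.filter (fun p => covar P (Z p.1) (Z p.2) ≠ 0) ⊆ T := by
        intro p hp
        simp only [hA, hT, Finset.mem_filter, Finset.mem_product, Finset.mem_univ,
          true_and] at hp ⊢
        exact ⟨hp.1.2, hp.2⟩
      calc ∑ p ∈ A.filter (fun p => covar P (Z p.1) (Z p.2) ≠ 0), covar P (Z p.1) (Z p.2)
          ≤ (A.filter (fun p => covar P (Z p.1) (Z p.2) ≠ 0)).card • V :=
            Finset.sum_le_card_nsmul _ _ _ (fun p _ => hcov_le p.1 p.2)
        _ ≤ (K : ℝ) * V := by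
            rw [nsmul_eq_mul]
            refine mul_le_mul_of_nonneg_right ?_ hV0
            exact_mod_cast (Finset.card_le_card hsub).trans hTK
    linarith
  -- the key fixed-subset second-moment bound
  have hfix : ∀ s : Finset (Fin n), s.card = m →
      ∫ ω, (WA Z m s ω - μ)^2 ∂P ≤ ((m + K : ℝ)/(m:ℝ)^2) * V := by
    intro s hs
    have hrw : ∀ ω, (WA Z m s ω - μ)^2
        = ((m:ℝ)^2)⁻¹ * ∑ p ∈ s ×ˢ s, (Z p.1 ω - μ) * (Z p.2 ω - μ) := by
      intro ω
      have h1 : WA Z m s ω - μ = (m:ℝ)⁻¹ * ∑ i ∈ s, (Z i ω - μ) := by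
        simp only [WA, Finset.sum_sub_distrib, Finset.sum_const, hs, nsmul_eq_mul,
          mul_sub]
        field_simp
      have h2 : ∑ p ∈ s ×ˢ s, (Z p.1 ω - μ) * (Z p.2 ω - μ)
          = (∑ i ∈ s, (Z i ω - μ)) * (∑ i ∈ s, (Z i ω - μ)) := by
        rw [Finset.sum_mul_sum]
        exact Finset.sum_product _ _ _
      rw [h1, h2]
      ring
    have hintrw : ∫ ω, (WA Z m s ω - μ)^2 ∂P
        = ((m:ℝ)^2)⁻¹ * ∑ p ∈ s ×ˢ s, covar P (Z p.1) (Z p.2) := by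
      simp_rw [hrw]
      rw [integral_const_mul,
        integral_finset_sum _ (fun p _ => hYint p.1 p.2)]
      congr 1
      exact Finset.sum_congr rfl fun p _ => (hcovar p.1 p.2).symm
    rw [hintrw]
    calc ((m:ℝ)^2)⁻¹ * ∑ p ∈ s ×ˢ s, covar P (Z p.1) (Z p.2)
        ≤ ((m:ℝ)^2)⁻¹ * ((m + K : ℝ) * V) := by
          exact mul_le_mul_of_nonneg_left (hsum_bound s hs) (by positivity)
      _ = ((m + K : ℝ)/(m:ℝ)^2) * V := by ring
  -- indicator functions of the events {S = s}
  have hgmeas : ∀ s, Measurable (gI S s) := by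
    intro s
    have hms : MeasurableSet {ω | S ω = s} := hSmeas (show MeasurableSet {s} from trivial)
    exact Measurable.ite hms measurable_const measurable_const
  have hgbd : ∀ s ω, ‖gI S s ω‖ ≤ 1 := by
    intro s ω; by_cases h : S ω = s <;> simp [gI, h]
  have hg0 : ∀ s ω, 0 ≤ gI S s ω := by
    intro s ω; by_cases h : S ω = s <;> simp [gI, h]
  have hgint : ∀ s, Integrable (gI S s) P := by
    intro s
    exact Integrable.mono' (integrable_const 1) (hgmeas s).aestronglyMeasurable
      (Filter.Eventually.of_forall (hgbd s))
  -- probabilities of {S = s}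
  set q : Finset (Fin n) → ℝ := fun s => ∫ ω, gI S s ω ∂P with hq
  have hq0 : ∀ s, 0 ≤ q s := by
    intro s
    simp only [hq]
    exact integral_nonneg (hg0 s)
  have hqzero : ∀ s : Finset (Fin n), s.card ≠ m → q s = 0 := by
    intro s hs
    have hz : ∀ ω, gI S s ω = 0 := by
      intro ω
      have hc := hScard ω
      simp only [gI, ite_eq_right_iff]
      intro h
      rw [h] at hc
      exact absurd hc hs
    simp only [hq]
    rw [integral_congr_ae (Filter.Eventually.of_forall hz), integral_zero]
  -- independence: the indicator of {S = s} is independent of any function of Z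
  have hZv : Measurable (fun ω (i : Fin n) => Z i ω) := measurable_pi_lambda _ hZmeas
  have hkey : ∀ (s : Finset (Fin n)) (f : (Fin n → ℝ) → ℝ), Measurable f →
      ∫ ω, gI S s ω * f (fun i => Z i ω) ∂P
        = q s * ∫ ω, f (fun i => Z i ω) ∂P := by
    intro s f hf
    have hindep : IndepFun (gI S s) (fun ω => f (fun i => Z i ω)) P :=
      hSindep.comp (φ := fun t : Finset (Fin n) => if t = s then (1:ℝ) else 0) (ψ := f)
        measurable_from_top hf
    have h := hindep.integral_mul_eq_mul_integral (hgmeas s).aestronglyMeasurable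
      (hf.comp hZv).aestronglyMeasurable
    simp only [hq]
    simpa [Pi.mul_apply] using h
  -- pointwise decomposition over the possible values of S
  have hdecomp : ∀ (F : Finset (Fin n) → Ω → ℝ) (ω : Ω),
      F (S ω) ω = ∑ s : Finset (Fin n), gI S s ω * F s ω := by
    intro F ω
    rw [Finset.sum_eq_single (S ω)]
    · simp [gI]
    · intro t _ ht
      simp [gI, Ne.symm ht]
    · intro h; exact absurd (Finset.mem_univ _) h
  have hqsum : ∑ s : Finset (Fin n), q s = 1 := by
    simp only [hq]
    rw [← integral_finset_sum _ (fun s _ => hgint s)]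
    have hone : ∀ ω, ∑ s : Finset (Fin n), gI S s ω = 1 := by
      intro ω
      have h := hdecomp (fun _ _ => (1:ℝ)) ω
      simpa using h.symm
    rw [integral_congr_ae (Filter.Eventually.of_forall hone)]
    simp
  -- properties of W
  have hWmeas : ∀ s, Measurable (WA Z m s) := by
    intro s
    exact (Finset.measurable_sum s (fun i _ => hZmeas i)).const_mul _
  have hWmem : ∀ s, MemLp (WA Z m s) 2 P := by
    intro s
    exact (memLp_finset_sum s (fun i _ => hZ i)).const_mul _
  have hWmean : ∀ s : Finset (Fin n), s.card = m → ∫ ω, WA Z m s ω ∂P = μ := by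
    intro s hs
    simp only [WA]
    rw [integral_const_mul, integral_finset_sum _ (fun i _ => (hZ i).integrable one_le_two)]
    simp_rw [hmean]
    rw [Finset.sum_const, hs, nsmul_eq_mul]
    field_simp
  -- the statistic X
  have hterm_mem : ∀ s, MemLp (fun ω => gI S s ω * WA Z m s ω) 2 P := by
    intro s
    refine MemLp.of_le (hWmem s) ((hgmeas s).mul (hWmeas s)).aestronglyMeasurable
      (Filter.Eventually.of_forall fun ω => ?_)
    rw [norm_mul]
    calc ‖gI S s ω‖ * ‖WA Z m s ω‖ ≤ 1 * ‖WA Z m s ω‖ :=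
          mul_le_mul_of_nonneg_right (hgbd s ω) (norm_nonneg _)
      _ = ‖WA Z m s ω‖ := one_mul _
  have hXmem : MemLp (fun ω => ∑ s : Finset (Fin n), gI S s ω * WA Z m s ω) 2 P :=
    memLp_finset_sum _ (fun s _ => hterm_mem s)
  have hXeq : (fun ω => (m:ℝ)⁻¹ * ∑ i ∈ S ω, Z i ω)
      = fun ω => ∑ s : Finset (Fin n), gI S s ω * WA Z m s ω := by
    funext ω
    exact hdecomp (WA Z m) ω
  -- mean of X is μ
  have hXmean : ∫ ω, (∑ s : Finset (Fin n), gI S s ω * WA Z m s ω) ∂P = μ := by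
    rw [integral_finset_sum _ (fun s _ => (hterm_mem s).integrable one_le_two)]
    have hterm : ∀ s : Finset (Fin n), ∫ ω, gI S s ω * WA Z m s ω ∂P = q s * μ := by
      intro s
      have hfm : Measurable (fun v : Fin n → ℝ => (m:ℝ)⁻¹ * ∑ i ∈ s, v i) :=
        (Finset.measurable_sum s (fun i _ => measurable_pi_apply i)).const_mul _
      have hk : ∫ ω, gI S s ω * WA Z m s ω ∂P = q s * ∫ ω, WA Z m s ω ∂P :=
        hkey s (fun v => (m:ℝ)⁻¹ * ∑ i ∈ s, v i) hfm
      by_cases hc : s.card = m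
      · rw [hk, hWmean s hc]
      · rw [hk, hqzero s hc, zero_mul, zero_mul]
    simp_rw [hterm]
    rw [← Finset.sum_mul, hqsum, one_mul]
  -- conclude via the decomposition of the variance
  rw [hXeq]
  set X : Ω → ℝ := fun ω => ∑ s : Finset (Fin n), gI S s ω * WA Z m s ω with hX
  rw [show variance X P = ∫ ω, (((X - fun _ => ∫ a, X a ∂P) ^ (2:ℕ) : Ω → ℝ) ω) ∂P from
    variance_eq_integral hXmem.aestronglyMeasurable.aemeasurable]
  have hsq_mem : ∀ s, Integrable (fun ω => (WA Z m s ω - μ)^2) P :=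
    fun s => ((hWmem s).sub (memLp_const μ)).integrable_sq
  have hterm_int : ∀ s, Integrable (fun ω => gI S s ω * (WA Z m s ω - μ)^2) P := by
    intro s
    exact Integrable.bdd_mul (hsq_mem s) (hgmeas s).aestronglyMeasurable
      (c := 1) (Filter.Eventually.of_forall (hgbd s))
  have hXω : ∀ ω, X ω = WA Z m (S ω) ω := by
    intro ω
    rw [hX]
    exact (hdecomp (WA Z m) ω).symm
  have hinteg : ∀ ω : Ω, (((X - fun _ => ∫ a, X a ∂P) ^ (2:ℕ) : Ω → ℝ) ω)
      = ∑ s : Finset (Fin n), gI S s ω * (WA Z m s ω - μ)^2 := by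
    intro ω
    have h0 : (((X - fun _ => ∫ a, X a ∂P) ^ (2:ℕ) : Ω → ℝ) ω) = (X ω - μ)^2 := by
      simp [hXmean]
    rw [h0, hXω ω]
    exact hdecomp (fun s ω => (WA Z m s ω - μ)^2) ω
  have hmain : (∫ ω, (((X - fun _ => ∫ a, X a ∂P) ^ (2:ℕ) : Ω → ℝ) ω) ∂P)
      = ∑ s : Finset (Fin n), q s * ∫ ω, (WA Z m s ω - μ)^2 ∂P := by
    rw [integral_congr_ae (Filter.Eventually.of_forall hinteg)]
    rw [integral_finset_sum _ (fun s _ => hterm_int s)]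
    refine Finset.sum_congr rfl fun s _ => ?_
    have hfm : Measurable (fun v : Fin n → ℝ => ((m:ℝ)⁻¹ * ∑ i ∈ s, v i - μ)^2) :=
      (((Finset.measurable_sum s (fun i _ => measurable_pi_apply i)).const_mul
        _).sub measurable_const).pow_const 2
    exact hkey s (fun v => ((m:ℝ)⁻¹ * ∑ i ∈ s, v i - μ)^2) hfm
  rw [hmain]
  have hstep : ∀ s : Finset (Fin n),
      q s * ∫ ω, (WA Z m s ω - μ)^2 ∂P ≤ q s * (((m + K : ℝ)/(m:ℝ)^2) * V) := by
    intro s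
    by_cases hc : s.card = m
    · exact mul_le_mul_of_nonneg_left (hfix s hc) (hq0 s)
    · rw [hqzero s hc]; simp
  calc ∑ s : Finset (Fin n), q s * ∫ ω, (WA Z m s ω - μ)^2 ∂P
      ≤ ∑ s : Finset (Fin n), q s * (((m + K : ℝ)/(m:ℝ)^2) * V) :=
        Finset.sum_le_sum (fun s _ => hstep s)
    _ = (∑ s : Finset (Fin n), q s) * (((m + K : ℝ)/(m:ℝ)^2) * V) := by
        rw [← Finset.sum_mul]
    _ = ((m + K : ℝ)/(m:ℝ)^2) * V := by rw [hqsum, one_mul]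
end

section
/- Fix integers k ≥ 2 and C ≥ 1. For each n, let Iₙ be a finite index set of cells with |Iₙ| = n, equipped with functions rowₙ and colₙ whose fibers each have at most C elements, and let (Z_{n,u})_{u∈Iₙ} be square-integrable real random variables on a common probability space with common mean μₙ such that Cov(Z_{n,u}, Z_{n,v}) = 0 whenever rowₙ(u) ≠ rowₙ(v) and colₙ(u) ≠ colₙ(v). Let Sₙ be a random subset of Iₙ of size mₙ = ⌈n/k⌉ that is independent of (Z_{n,u})_{u∈Iₙ}. If max_{u∈Iₙ} Var(Z_{n,u}) → 0 as n → ∞, then √n · ((1/mₙ) · Σ_{u∈Sₙ} Z_{n,u} − μₙ) → 0 in probability. (Corollary 1: under two-way clustering with bounded cluster sizes, as-independent sample splitting makes the empirical process term o_P(1/√n), so the multi-way cross-fitting scheme of Chiang et al. is unnecessary for bias elimination.) -/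
/-!
STATEMENT 5 (Corollary 1: as-independent sample splitting under two-way
clustering with bounded cluster sizes makes the empirical process term
o_P(1/√n)):
Fix k ≥ 2 and C ≥ 1.  For each n, a finite index set Iₙ of cells with
|Iₙ| = n, functions rowₙ, colₙ whose fibers have at most C elements, and
square-integrable (Z_{n,u})_{u∈Iₙ} with common mean μₙ such that
Cov(Z_{n,u}, Z_{n,v}) = 0 whenever rowₙ(u) ≠ rowₙ(v) and colₙ(u) ≠ colₙ(v).
Sₙ a random subset of Iₙ of size mₙ = ⌈n/k⌉ independent of the data.  If
max_u Var(Z_{n,u}) → 0, then √n · ((1/mₙ)·Σ_{u∈Sₙ} Z_{n,u} − μₙ) → 0 in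
probability.
-/

open MeasureTheory ProbabilityTheory Filter

lemma integrable_mul_of_memL2 {Ω : Type*} [MeasurableSpace Ω] {P : Measure Ω} {f g : Ω → ℝ}
    (hf : MemLp f 2 P) (hg : MemLp g 2 P) : Integrable (fun ω => f ω * g ω) P := by
  refine Integrable.mono' ((hf.integrable_sq.add hg.integrable_sq).div_const 2)
    (hf.aestronglyMeasurable.mul hg.aestronglyMeasurable) ?_
  filter_upwards with ω
  simp only [Real.norm_eq_abs, abs_mul, Pi.add_apply]
  nlinarith [sq_nonneg (|f ω| - |g ω|), sq_abs (f ω), sq_abs (g ω)]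

lemma variance_eq_integral_sq {Ω : Type*} [MeasurableSpace Ω] {P : Measure Ω}
    [IsProbabilityMeasure P] {f : Ω → ℝ} (hf : MemLp f 2 P) :
    variance f P = ∫ ω, (f ω - ∫ a, f a ∂P) ^ 2 ∂P := by
  rw [variance_eq_integral hf.aestronglyMeasurable.aemeasurable]

lemma variance_finset_sum_eq_covar {Ω : Type*} [MeasurableSpace Ω] (P : Measure Ω)
    [IsProbabilityMeasure P] {ι : Type*} (s : Finset ι) (X : ι → Ω → ℝ)
    (hX : ∀ u, MemLp (X u) 2 P) :
    variance (fun ω => ∑ u ∈ s, X u ω) P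
      = ∑ u ∈ s, ∑ v ∈ s, covar P (X u) (X v) := by
  have hXi : ∀ u : ι, Integrable (X u) P := fun u => (hX u).integrable one_le_two
  have hsum : MemLp (fun ω => ∑ u ∈ s, X u ω) 2 P :=
    memLp_finset_sum s (fun u _ => hX u)
  have hEsum : (∫ ω, ∑ u ∈ s, X u ω ∂P) = ∑ u ∈ s, ∫ a, X u a ∂P :=
    integral_finset_sum s (fun u _ => hXi u)
  have hprod : ∀ u v : ι, Integrable
      (fun ω => (X u ω - ∫ a, X u a ∂P) * (X v ω - ∫ a, X v a ∂P)) P := fun u v =>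
    integrable_mul_of_memL2 ((hX u).sub (memLp_const _)) ((hX v).sub (memLp_const _))
  rw [variance_eq_integral_sq hsum]
  have key : ∀ ω, (∑ u ∈ s, X u ω - ∫ a, ∑ u ∈ s, X u a ∂P) ^ 2
      = ∑ u ∈ s, ∑ v ∈ s, (X u ω - ∫ a, X u a ∂P) * (X v ω - ∫ a, X v a ∂P) := by
    intro ω
    rw [hEsum, ← Finset.sum_sub_distrib, sq, Finset.sum_mul_sum]
  simp_rw [key]
  rw [integral_finset_sum s (fun u _ => integrable_finset_sum s (fun v _ => hprod u v))]
  exact Finset.sum_congr rfl fun u _ => integral_finset_sum s (fun v _ => hprod u v)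

lemma abs_covar_le {Ω : Type*} [MeasurableSpace Ω] {P : Measure Ω}
    [IsProbabilityMeasure P] {f g : Ω → ℝ} (hf : MemLp f 2 P) (hg : MemLp g 2 P) :
    |covar P f g| ≤ (variance f P + variance g P) / 2 := by
  have hF : MemLp (fun ω => f ω - ∫ a, f a ∂P) 2 P := hf.sub (memLp_const _)
  have hG : MemLp (fun ω => g ω - ∫ a, g a ∂P) 2 P := hg.sub (memLp_const _)
  have h1 : |covar P f g| ≤ ∫ ω, |f ω - ∫ a, f a ∂P| * |g ω - ∫ a, g a ∂P| ∂P := by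
    simpa [covar, Real.norm_eq_abs, abs_mul] using
      norm_integral_le_integral_norm
        (fun ω => (f ω - ∫ a, f a ∂P) * (g ω - ∫ a, g a ∂P)) (μ := P)
  refine h1.trans ?_
  have h2 : ∫ ω, |f ω - ∫ a, f a ∂P| * |g ω - ∫ a, g a ∂P| ∂P
      ≤ ∫ ω, ((f ω - ∫ a, f a ∂P) ^ 2 + (g ω - ∫ a, g a ∂P) ^ 2) / 2 ∂P := by
    have hint : Integrable (fun ω => ((f ω - ∫ a, f a ∂P) ^ 2 + (g ω - ∫ a, g a ∂P) ^ 2) / 2) P := by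
      simpa using (hF.integrable_sq.add hG.integrable_sq).div_const 2
    refine integral_mono (by simpa [abs_mul] using (integrable_mul_of_memL2 hF hG).abs) hint ?_
    intro ω
    simp only [Pi.add_apply]
    nlinarith [sq_nonneg (|f ω - ∫ a, f a ∂P| - |g ω - ∫ a, g a ∂P|),
      sq_abs (f ω - ∫ a, f a ∂P), sq_abs (g ω - ∫ a, g a ∂P)]
  refine h2.trans ?_
  rw [integral_div, integral_add hF.integrable_sq hG.integrable_sq,
    ← variance_eq_integral_sq hf, ← variance_eq_integral_sq hg]


theorem as_independent_split_two_way_clustering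
    (k C : ℕ) (hk : 2 ≤ k) (hC : 1 ≤ C)
    (I : ℕ → Type*) [∀ n, Fintype (I n)] (hcard : ∀ n, Fintype.card (I n) = n)
    (A B : ℕ → Type*) (row : ∀ n, I n → A n) (col : ∀ n, I n → B n)
    (hrow : ∀ n a, Set.ncard {u : I n | row n u = a} ≤ C)
    (hcol : ∀ n b, Set.ncard {u : I n | col n u = b} ≤ C)
    (Ω : ℕ → Type*) [∀ n, MeasurableSpace (Ω n)]
    (P : ∀ n, Measure (Ω n)) [∀ n, IsProbabilityMeasure (P n)]
    (Z : ∀ n, I n → Ω n → ℝ)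
    (hZmeas : ∀ n u, Measurable (Z n u))
    (hZ2 : ∀ n u, MemLp (Z n u) 2 (P n))
    (μ : ℕ → ℝ) (hmean : ∀ n u, ∫ ω, Z n u ω ∂(P n) = μ n)
    (hcov : ∀ n (u v : I n), row n u ≠ row n v → col n u ≠ col n v →
        covar (P n) (Z n u) (Z n v) = 0)
    (S : ∀ n, Ω n → Finset (I n)) (hSmeas : ∀ n, Measurable (S n))
    (hScard : ∀ n ω, (S n ω).card = ⌈(n : ℝ) / k⌉₊)
    (hSindep : ∀ n, IndepFun (S n) (fun ω u => Z n u ω) (P n))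
    (hvar : Tendsto (fun n => ⨆ u : I n, variance (Z n u) (P n)) atTop (nhds 0)) :
    ∀ ε > (0 : ℝ),
      Tendsto (fun n => P n {ω | ε <
          |Real.sqrt n * ((⌈(n : ℝ) / k⌉₊ : ℝ)⁻¹ * ∑ u ∈ S n ω, Z n u ω - μ n)|})
        atTop (nhds 0) := by
  classical
  intro ε hε
  set V : ℕ → ℝ := fun n => ⨆ u : I n, variance (Z n u) (P n) with hVdef
  have hbound : Tendsto (fun n => ENNReal.ofReal (2 * C * k / ε ^ 2 * V n)) atTop (nhds 0) := by
    have h1 : Tendsto (fun n => 2 * (C:ℝ) * k / ε ^ 2 * V n) atTop (nhds 0) := by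
      simpa using hvar.const_mul (2 * (C:ℝ) * k / ε ^ 2)
    simpa using ENNReal.tendsto_ofReal h1
  refine tendsto_of_tendsto_of_tendsto_of_le_of_le' tendsto_const_nhds hbound
    (Eventually.of_forall fun n => zero_le) ?_
  filter_upwards [eventually_ge_atTop 1] with n hn
  set m : ℕ := ⌈(n : ℝ) / k⌉₊ with hmdef
  have hk0 : (0:ℝ) < k := by
    have : (2:ℝ) ≤ k := by exact_mod_cast hk
    linarith
  have hn0 : (0:ℝ) < n := by exact_mod_cast hn
  have hm1 : 1 ≤ m := Nat.one_le_iff_ne_zero.mpr (by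
    simp only [hmdef, Ne, Nat.ceil_eq_zero, not_le]
    positivity)
  have hmR : (0:ℝ) < m := by exact_mod_cast hm1
  have hnm : (n : ℝ) ≤ k * m := by
    have h := Nat.le_ceil ((n:ℝ)/k)
    calc (n:ℝ) = k * ((n:ℝ)/k) := by field_simp
    _ ≤ k * m := mul_le_mul_of_nonneg_left h hk0.le
  haveI hne : Nonempty (I n) := Fintype.card_pos_iff.mp (by rw [hcard]; omega)
  have hVle : ∀ u : I n, variance (Z n u) (P n) ≤ V n := fun u => by
    have := le_ciSup (f := fun u : I n => variance (Z n u) (P n))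
      (Set.Finite.bddAbove (Set.finite_range _)) u
    simpa [hVdef] using this
  have hV0 : 0 ≤ V n := le_trans (variance_nonneg _ _) (hVle (Classical.arbitrary _))
  -- Chebyshev bound for a fixed deterministic fold s of size m
  have cheb : ∀ s : Finset (I n), s.card = m →
      P n {ω | ε < |Real.sqrt n * ((m:ℝ)⁻¹ * ∑ u ∈ s, Z n u ω - μ n)|}
        ≤ ENNReal.ofReal (2 * C * k / ε ^ 2 * V n) := by
    intro s hs
    have hX2 : MemLp (fun ω => ∑ u ∈ s, Z n u ω) 2 (P n) :=
      memLp_finset_sum s (fun u _ => hZ2 n u)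
    have hEX : (∫ ω, ∑ u ∈ s, Z n u ω ∂(P n)) = m * μ n := by
      rw [integral_finset_sum s (fun u _ => (hZ2 n u).integrable one_le_two)]
      simp [hmean n, hs, mul_comm]
    have hsqrt : (0:ℝ) < Real.sqrt n := Real.sqrt_pos.mpr hn0
    have hc : (0:ℝ) < ε * m / Real.sqrt n := by positivity
    have hsub : {ω | ε < |Real.sqrt n * ((m:ℝ)⁻¹ * ∑ u ∈ s, Z n u ω - μ n)|}
        ⊆ {ω | ε * m / Real.sqrt n ≤
            |(∑ u ∈ s, Z n u ω) - ∫ a, ∑ u ∈ s, Z n u a ∂(P n)|} := by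
      intro ω hω
      simp only [Set.mem_setOf_eq] at hω ⊢
      rw [hEX]
      have key : Real.sqrt n * ((m:ℝ)⁻¹ * ∑ u ∈ s, Z n u ω - μ n)
          = (Real.sqrt n / m) * ((∑ u ∈ s, Z n u ω) - m * μ n) := by
        field_simp
      rw [key, abs_mul, abs_of_nonneg (by positivity : (0:ℝ) ≤ Real.sqrt n / m)] at hω
      have h2 : ε / (Real.sqrt n / m) < |(∑ u ∈ s, Z n u ω) - m * μ n| :=
        (div_lt_iff₀ (by positivity)).mpr (by rw [mul_comm]; exact hω)
      rw [div_div_eq_mul_div] at h2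
      exact h2.le
    -- variance bound
    have hvarX : variance (fun ω => ∑ u ∈ s, Z n u ω) (P n) ≤ m * (2 * C * V n) := by
      rw [variance_finset_sum_eq_covar (P n) s (Z n) (hZ2 n)]
      have inner : ∀ u ∈ s, ∑ v ∈ s, covar (P n) (Z n u) (Z n v) ≤ 2 * C * V n := by
        intro u _
        set p : I n → Prop := fun v => row n v = row n u ∨ col n v = col n u with hp
        have hsplit : ∑ v ∈ s, covar (P n) (Z n u) (Z n v)
            = ∑ v ∈ s.filter p, covar (P n) (Z n u) (Z n v) := by
          refine (Finset.sum_filter_of_ne ?_).symm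
          intro v _ hne
          by_contra hpv
          push_neg at hpv
          exact hne (hcov n u v (fun h => hpv.1 h.symm) (fun h => hpv.2 h.symm))
        have hcovV : ∀ v ∈ s.filter p, covar (P n) (Z n u) (Z n v) ≤ V n := by
          intro v _
          refine le_trans (le_abs_self _) (le_trans (abs_covar_le (hZ2 n u) (hZ2 n v)) ?_)
          have := hVle u; have := hVle v; linarith
        have hcardf : ((s.filter p).card : ℝ) ≤ 2 * C := by
          have hsubf : s.filter p ⊆
              (Finset.univ.filter (fun v => row n v = row n u)) ∪
              (Finset.univ.filter (fun v => col n v = col n u)) := by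
            intro v hv
            simp only [Finset.mem_filter, Finset.mem_union, Finset.mem_univ, true_and] at hv ⊢
            exact hv.2
          have hr : (Finset.univ.filter (fun v => row n v = row n u)).card ≤ C := by
            refine le_trans (le_of_eq ?_) (hrow n (row n u))
            rw [← Set.ncard_coe_finset]
            congr 1
            ext v; simp
          have hcbd : (Finset.univ.filter (fun v => col n v = col n u)).card ≤ C := by
            refine le_trans (le_of_eq ?_) (hcol n (col n u))
            rw [← Set.ncard_coe_finset]
            congr 1
            ext v; simp
          have := le_trans (Finset.card_le_card hsubf)
            (le_trans (Finset.card_union_le _ _) (Nat.add_le_add hr hcbd))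
          calc ((s.filter p).card : ℝ) ≤ (C + C : ℕ) := by exact_mod_cast this
          _ = 2 * C := by push_cast; ring
        calc ∑ v ∈ s, covar (P n) (Z n u) (Z n v)
            = ∑ v ∈ s.filter p, covar (P n) (Z n u) (Z n v) := hsplit
          _ ≤ ∑ v ∈ s.filter p, V n := Finset.sum_le_sum hcovV
          _ = ((s.filter p).card : ℝ) * V n := by rw [Finset.sum_const, nsmul_eq_mul]
          _ ≤ 2 * C * V n := mul_le_mul_of_nonneg_right hcardf hV0
      calc ∑ u ∈ s, ∑ v ∈ s, covar (P n) (Z n u) (Z n v)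
          ≤ ∑ _u ∈ s, 2 * C * V n := Finset.sum_le_sum inner
        _ = (s.card : ℝ) * (2 * C * V n) := by rw [Finset.sum_const, nsmul_eq_mul]
        _ = m * (2 * C * V n) := by rw [hs]
    have hfinal : variance (fun ω => ∑ u ∈ s, Z n u ω) (P n) / (ε * m / Real.sqrt n) ^ 2
        ≤ 2 * C * k / ε ^ 2 * V n := by
      have hc2 : (ε * m / Real.sqrt n) ^ 2 = ε ^ 2 * m ^ 2 / n := by
        rw [div_pow, mul_pow, Real.sq_sqrt hn0.le]
      rw [hc2, div_div_eq_mul_div, div_le_iff₀ (by positivity)]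
      have hvar0 := variance_nonneg (fun ω => ∑ u ∈ s, Z n u ω) (P n)
      calc variance (fun ω => ∑ u ∈ s, Z n u ω) (P n) * n
          ≤ (m * (2 * C * V n)) * (k * m) :=
            mul_le_mul hvarX hnm hn0.le (by positivity)
        _ = 2 * C * k / ε ^ 2 * V n * (ε ^ 2 * m ^ 2) := by field_simp
    calc P n {ω | ε < |Real.sqrt n * ((m:ℝ)⁻¹ * ∑ u ∈ s, Z n u ω - μ n)|}
        ≤ P n {ω | ε * m / Real.sqrt n ≤
            |(∑ u ∈ s, Z n u ω) - ∫ a, ∑ u ∈ s, Z n u a ∂(P n)|} := measure_mono hsub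
      _ ≤ ENNReal.ofReal (variance (fun ω => ∑ u ∈ s, Z n u ω) (P n)
            / (ε * m / Real.sqrt n) ^ 2) := meas_ge_le_variance_div_sq hX2 hc
      _ ≤ ENNReal.ofReal (2 * C * k / ε ^ 2 * V n) := ENNReal.ofReal_le_ofReal hfinal
  -- decompose over the realized fold
  set Zvec : Ω n → (I n → ℝ) := fun ω u => Z n u ω with hZvec
  have hBmeas : ∀ s : Finset (I n), MeasurableSet
      {z : I n → ℝ | ε < |Real.sqrt n * ((m:ℝ)⁻¹ * ∑ u ∈ s, z u - μ n)|} := by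
    intro s
    have hmsum : Measurable (fun z : I n → ℝ => ∑ u ∈ s, z u) :=
      Finset.measurable_sum s (fun u _ => measurable_pi_apply u)
    exact measurableSet_lt measurable_const
      ((((hmsum.const_mul _).sub_const _).const_mul _).abs)
  have hSsetMeas : ∀ s : Finset (I n), MeasurableSet ({s} : Set (Finset (I n))) :=
    fun s => MeasurableSpace.measurableSet_top
  have hEdecomp : {ω | ε < |Real.sqrt n * ((m:ℝ)⁻¹ * ∑ u ∈ S n ω, Z n u ω - μ n)|}
      ⊆ ⋃ s : Finset (I n), (S n ⁻¹' {s} ∩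
        Zvec ⁻¹' {z : I n → ℝ | ε < |Real.sqrt n * ((m:ℝ)⁻¹ * ∑ u ∈ s, z u - μ n)|}) := by
    intro ω hω
    exact Set.mem_iUnion.mpr ⟨S n ω, rfl, hω⟩
  calc P n {ω | ε < |Real.sqrt n * ((m:ℝ)⁻¹ * ∑ u ∈ S n ω, Z n u ω - μ n)|}
      ≤ P n (⋃ s : Finset (I n), (S n ⁻¹' {s} ∩
          Zvec ⁻¹' {z : I n → ℝ | ε < |Real.sqrt n * ((m:ℝ)⁻¹ * ∑ u ∈ s, z u - μ n)|})) :=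
        measure_mono hEdecomp
    _ ≤ ∑' s : Finset (I n), P n (S n ⁻¹' {s} ∩
          Zvec ⁻¹' {z : I n → ℝ | ε < |Real.sqrt n * ((m:ℝ)⁻¹ * ∑ u ∈ s, z u - μ n)|}) :=
        measure_iUnion_le _
    _ ≤ ∑' s : Finset (I n), P n (S n ⁻¹' {s}) * ENNReal.ofReal (2 * C * k / ε ^ 2 * V n) := by
        refine ENNReal.tsum_le_tsum fun s => ?_
        rw [(hSindep n).measure_inter_preimage_eq_mul {s} _ (hSsetMeas s) (hBmeas s)]
        by_cases hcase : s.card = m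
        · exact mul_le_mul_right (cheb s hcase) _
        · have hempty : S n ⁻¹' {s} = (∅ : Set (Ω n)) := by
            ext ω
            simp only [Set.mem_preimage, Set.mem_singleton_iff, Set.mem_empty_iff_false,
              iff_false]
            intro h
            exact hcase (h ▸ hScard n ω)
          simp [hempty]
    _ = (∑' s : Finset (I n), P n (S n ⁻¹' {s})) * ENNReal.ofReal (2 * C * k / ε ^ 2 * V n) :=
        ENNReal.tsum_mul_right
    _ ≤ 1 * ENNReal.ofReal (2 * C * k / ε ^ 2 * V n) := by
        gcongr
        rw [← measure_iUnion (fun s t hst => Set.disjoint_left.mpr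
            (fun ω hs ht => hst (by
              simp only [Set.mem_preimage, Set.mem_singleton_iff] at hs ht
              rw [← hs, ← ht])))
          (fun s => hSmeas n (hSsetMeas s))]
        exact prob_le_one
    _ = ENNReal.ofReal (2 * C * k / ε ^ 2 * V n) := one_mul _
end

section
/- Fix an integer k ≥ 2. For each n, let Gₙ be a simple graph on {1, …, n} with maximum degree at most Kₙ (Kₙ ≥ 1), and let Z_{n,1}, …, Z_{n,n} be square-integrable real random variables on a common probability space with common mean μₙ such that Cov(Z_{n,i}, Z_{n,j}) = 0 whenever i ≠ j and {i, j} is not an edge of Gₙ. Let rₙ > 0 satisfy rₙ² · Kₙ ≤ n, and let Sₙ be a random subset of {1, …, n} of size mₙ = ⌈n/k⌉ that is independent of (Z_{n,1}, …, Z_{n,n}). If max_{1≤i≤n} Var(Z_{n,i}) → 0 as n → ∞, then rₙ · ((1/mₙ) · Σ_{i∈Sₙ} Z_{n,i} − μₙ) → 0 in probability. (Corollary 2: under network dependence with maximum degree Kₙ and a dependent-data CLT rate rₙ ≤ √(n/Kₙ), as-independent cross-fitting eliminates the empirical process term at rate o_P(1/rₙ).) -/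
/-!
STATEMENT 7 (Corollary 2: as-independent cross-fitting under network
dependence):
Fix k ≥ 2.  For each n, Gₙ a simple graph on {1, …, n} with maximum degree at
most Kₙ (Kₙ ≥ 1), and square-integrable Z_{n,1}, …, Z_{n,n} with common mean
μₙ such that Cov(Z_{n,i}, Z_{n,j}) = 0 whenever i ≠ j and {i, j} is not an
edge of Gₙ.  rₙ > 0 with rₙ²·Kₙ ≤ n; Sₙ a random subset of size mₙ = ⌈n/k⌉
independent of the vector.  If max_i Var(Z_{n,i}) → 0, then
rₙ · ((1/mₙ)·Σ_{i∈Sₙ} Z_{n,i} − μₙ) → 0 in probability.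
-/

open MeasureTheory ProbabilityTheory Filter

section helpers
variable {Ω : Type*} [MeasurableSpace Ω] {P : Measure Ω} [IsProbabilityMeasure P]

lemma integrable_mul_of_memL2_s7 {X Y : Ω → ℝ} (hX : MemLp X 2 P) (hY : MemLp Y 2 P) :
    Integrable (fun ω => X ω * Y ω) P := by
  have h1 : Integrable (fun ω => X ω ^ 2) P := hX.integrable_sq
  have h2 : Integrable (fun ω => Y ω ^ 2) P := hY.integrable_sq
  refine ((h1.add h2).const_mul (1/2 : ℝ)).mono' (hX.aestronglyMeasurable.mul hY.aestronglyMeasurable) ?_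
  filter_upwards with ω
  simp only [Pi.add_apply, Real.norm_eq_abs, abs_mul]
  nlinarith [sq_nonneg (|X ω| - |Y ω|), sq_abs (X ω), sq_abs (Y ω), abs_nonneg (X ω), abs_nonneg (Y ω)]

lemma abs_covar_le_s7 {X Y : Ω → ℝ} (hX : MemLp X 2 P) (hY : MemLp Y 2 P) :
    |covar P X Y| ≤ (variance X P + variance Y P) / 2 := by
  have hXc : MemLp (fun ω => X ω - ∫ a, X a ∂P) 2 P := hX.sub (memLp_const _)
  have hYc : MemLp (fun ω => Y ω - ∫ a, Y a ∂P) 2 P := hY.sub (memLp_const _)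
  have hint : Integrable (fun ω => (X ω - ∫ a, X a ∂P) * (Y ω - ∫ a, Y a ∂P)) P :=
    integrable_mul_of_memL2_s7 hXc hYc
  have hvX : variance X P = ∫ ω, (X ω - ∫ a, X a ∂P) ^ 2 ∂P := by
    rw [variance_eq_integral hX.aestronglyMeasurable.aemeasurable]
  have hvY : variance Y P = ∫ ω, (Y ω - ∫ a, Y a ∂P) ^ 2 ∂P := by
    rw [variance_eq_integral hY.aestronglyMeasurable.aemeasurable]
  have habs := norm_integral_le_integral_norm (μ := P)
    (f := fun ω => (X ω - ∫ a, X a ∂P) * (Y ω - ∫ a, Y a ∂P))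
  rw [Real.norm_eq_abs] at habs
  refine le_trans habs ?_
  have hI : Integrable (fun ω => ((X ω - ∫ a, X a ∂P) ^ 2 + (Y ω - ∫ a, Y a ∂P) ^ 2) / 2) P := by
    simpa using (hXc.integrable_sq.add hYc.integrable_sq).div_const 2
  have key : ∫ ω, ‖(X ω - ∫ a, X a ∂P) * (Y ω - ∫ a, Y a ∂P)‖ ∂P
      ≤ ∫ ω, ((X ω - ∫ a, X a ∂P) ^ 2 + (Y ω - ∫ a, Y a ∂P) ^ 2) / 2 ∂P := by
    refine integral_mono hint.norm hI fun ω => ?_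
    simp only [Real.norm_eq_abs, abs_mul]
    nlinarith [sq_nonneg (|X ω - ∫ a, X a ∂P| - |Y ω - ∫ a, Y a ∂P|),
      sq_abs (X ω - ∫ a, X a ∂P), sq_abs (Y ω - ∫ a, Y a ∂P),
      abs_nonneg (X ω - ∫ a, X a ∂P), abs_nonneg (Y ω - ∫ a, Y a ∂P)]
  refine le_trans key (le_of_eq ?_)
  rw [integral_div, integral_add hXc.integrable_sq hYc.integrable_sq, hvX, hvY]

lemma variance_sum_eq {ι : Type*} (s : Finset ι) (X : ι → Ω → ℝ)
    (hX : ∀ i ∈ s, MemLp (X i) 2 P) :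
    variance (fun ω => ∑ i ∈ s, X i ω) P = ∑ i ∈ s, ∑ j ∈ s, covar P (X i) (X j) := by
  have hint : ∀ i ∈ s, Integrable (X i) P := fun i hi => (hX i hi).integrable one_le_two
  have hXc : ∀ i ∈ s, MemLp (fun ω => X i ω - ∫ a, X i a ∂P) 2 P :=
    fun i hi => (hX i hi).sub (memLp_const _)
  have hsum : MemLp (fun ω => ∑ i ∈ s, X i ω) 2 P := by
    have h := memLp_finset_sum' s hX
    rwa [show (∑ i ∈ s, X i) = fun ω => ∑ i ∈ s, X i ω from funext fun ω => by simp] at h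
  have hEsum : ∫ ω, (∑ i ∈ s, X i ω) ∂P = ∑ i ∈ s, ∫ a, X i a ∂P :=
    integral_finset_sum s hint
  calc variance (fun ω => ∑ i ∈ s, X i ω) P
      = ∫ ω, (∑ i ∈ s, (X i ω - ∫ a, X i a ∂P)) ^ 2 ∂P := by
        rw [variance_eq_integral hsum.aestronglyMeasurable.aemeasurable]
        refine integral_congr_ae (Eventually.of_forall fun ω => ?_)
        simp [hEsum, Finset.sum_sub_distrib]
    _ = ∫ ω, ∑ i ∈ s, ∑ j ∈ s, (X i ω - ∫ a, X i a ∂P) * (X j ω - ∫ a, X j a ∂P) ∂P := by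
        refine integral_congr_ae (Eventually.of_forall fun ω => ?_)
        simp only [sq, Finset.sum_mul_sum]
    _ = ∑ i ∈ s, ∑ j ∈ s, covar P (X i) (X j) := by
        rw [integral_finset_sum s (fun i hi => integrable_finset_sum s
          (fun j hj => integrable_mul_of_memL2_s7 (hXc i hi) (hXc j hj)))]
        exact Finset.sum_congr rfl fun i hi =>
          integral_finset_sum s (fun j hj => integrable_mul_of_memL2_s7 (hXc i hi) (hXc j hj))

lemma variance_sum_le {ι : Type*} (s : Finset ι) (X : ι → Ω → ℝ)
    (hX : ∀ i ∈ s, MemLp (X i) 2 P) (V : ℝ) (hV : 0 ≤ V)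
    (hvar : ∀ i ∈ s, variance (X i) P ≤ V) (D : ℕ)
    (hD : ∀ i ∈ s, ((s.filter (fun j => covar P (X i) (X j) ≠ 0))).card ≤ D) :
    variance (fun ω => ∑ i ∈ s, X i ω) P ≤ (s.card : ℝ) * D * V := by
  classical
  rw [variance_sum_eq s X hX]
  have hbound : ∀ i ∈ s, ∑ j ∈ s, covar P (X i) (X j) ≤ (D : ℝ) * V := by
    intro i hi
    rw [← Finset.sum_filter_ne_zero]
    calc ∑ j ∈ s.filter (fun j => covar P (X i) (X j) ≠ 0), covar P (X i) (X j)
        ≤ ∑ j ∈ s.filter (fun j => covar P (X i) (X j) ≠ 0), V := by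
          refine Finset.sum_le_sum fun j hj => ?_
          have hj' := Finset.mem_filter.1 hj
          refine le_trans (le_abs_self _) (le_trans (abs_covar_le_s7 (hX i hi) (hX j hj'.1)) ?_)
          have := hvar i hi; have := hvar j hj'.1; linarith
      _ ≤ (D : ℝ) * V := by
          rw [Finset.sum_const, nsmul_eq_mul]
          exact mul_le_mul_of_nonneg_right (Nat.cast_le.2 (hD i hi)) hV
  calc ∑ i ∈ s, ∑ j ∈ s, covar P (X i) (X j) ≤ ∑ i ∈ s, (D : ℝ) * V :=
        Finset.sum_le_sum hbound
    _ = (s.card : ℝ) * D * V := by rw [Finset.sum_const, nsmul_eq_mul]; ring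

end helpers


theorem as_independent_split_network_dependence
    (k : ℕ) (hk : 2 ≤ k)
    (G : ∀ n : ℕ, SimpleGraph (Fin n)) [∀ n, DecidableRel (G n).Adj]
    (K : ℕ → ℕ) (hKpos : ∀ n, 1 ≤ K n)
    (hdeg : ∀ n (i : Fin n), (G n).degree i ≤ K n)
    (Ω : ℕ → Type*) [∀ n, MeasurableSpace (Ω n)]
    (P : ∀ n, Measure (Ω n)) [∀ n, IsProbabilityMeasure (P n)]
    (Z : ∀ n, Fin n → Ω n → ℝ)
    (hZmeas : ∀ n i, Measurable (Z n i))
    (hZ2 : ∀ n i, MemLp (Z n i) 2 (P n))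
    (μ : ℕ → ℝ) (hmean : ∀ n i, ∫ ω, Z n i ω ∂(P n) = μ n)
    (hcov : ∀ n (i j : Fin n), i ≠ j → ¬ (G n).Adj i j →
        covar (P n) (Z n i) (Z n j) = 0)
    (r : ℕ → ℝ) (hrpos : ∀ n, 0 < r n) (hrK : ∀ n, (r n) ^ 2 * (K n : ℝ) ≤ n)
    (S : ∀ n, Ω n → Finset (Fin n)) (hSmeas : ∀ n, Measurable (S n))
    (hScard : ∀ n ω, (S n ω).card = ⌈(n : ℝ) / k⌉₊)
    (hSindep : ∀ n, IndepFun (S n) (fun ω i => Z n i ω) (P n))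
    (hvar : Tendsto (fun n => ⨆ i : Fin n, variance (Z n i) (P n)) atTop (nhds 0)) :
    ∀ ε > (0 : ℝ),
      Tendsto (fun n => P n {ω | ε <
          |r n * ((⌈(n : ℝ) / k⌉₊ : ℝ)⁻¹ * ∑ i ∈ S n ω, Z n i ω - μ n)|})
        atTop (nhds 0) := by
  classical
  intro ε hε
  set V : ℕ → ℝ := fun n => ⨆ i : Fin n, variance (Z n i) (P n) with hV
  -- the bounding sequence
  have hCtend : Tendsto (fun n => ENNReal.ofReal ((2 * k * V n) / ε ^ 2)) atTop (nhds 0) := by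
    have h1 : Tendsto (fun n => (2 * k * V n) / ε ^ 2) atTop (nhds 0) := by
      have := (hvar.const_mul (2 * (k : ℝ))).div_const (ε ^ 2)
      simpa using this
    have h2 := ENNReal.tendsto_ofReal h1
    simpa using h2
  refine tendsto_of_tendsto_of_tendsto_of_le_of_le' tendsto_const_nhds hCtend
    (Eventually.of_forall fun n => zero_le) ?_
  filter_upwards [eventually_ge_atTop 1] with n hn
  -- notation
  set m : ℕ := ⌈(n : ℝ) / k⌉₊ with hm
  have hkpos : (0 : ℝ) < k := by positivity
  have hmpos : 1 ≤ m := by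
    rw [hm, Nat.one_le_ceil_iff]
    positivity
  have hmR : (1 : ℝ) ≤ (m : ℝ) := by exact_mod_cast hmpos
  have hmne : (m : ℝ) ≠ 0 := by linarith
  have hnm : (n : ℝ) ≤ k * m := by
    have := Nat.le_ceil ((n : ℝ) / k)
    rw [← hm] at this
    rw [div_le_iff₀ hkpos] at this
    linarith [this]
  -- variance facts
  have hbdd : BddAbove (Set.range fun i : Fin n => variance (Z n i) (P n)) :=
    (Set.finite_range _).bddAbove
  have hvle : ∀ i : Fin n, variance (Z n i) (P n) ≤ V n := fun i => le_ciSup hbdd i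
  have hVnonneg : 0 ≤ V n := by
    have i0 : Fin n := ⟨0, hn⟩
    exact le_trans (variance_nonneg (Z n i0) (P n)) (hvle i0)
  -- the per-set event in the product space
  set B : Finset (Fin n) → Set (Fin n → ℝ) := fun s =>
    {z : Fin n → ℝ | ε < |r n * ((m : ℝ)⁻¹ * ∑ i ∈ s, z i - μ n)|} with hB
  have hBmeas : ∀ s, MeasurableSet (B s) := by
    intro s
    have hg : Measurable fun z : Fin n → ℝ =>
        |r n * ((m : ℝ)⁻¹ * ∑ i ∈ s, z i - μ n)| := by
      apply Measurable.abs
      apply Measurable.const_mul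
      apply Measurable.sub_const
      exact (Finset.measurable_sum s fun i _ => measurable_pi_apply i).const_mul _
    exact measurableSet_lt measurable_const hg
  -- Chebyshev for each admissible s
  have hcheb : ∀ s : Finset (Fin n), s.card = m →
      P n ((fun ω i => Z n i ω) ⁻¹' B s) ≤ ENNReal.ofReal ((2 * k * V n) / ε ^ 2) := by
    intro s hcard
    set X : Ω n → ℝ := fun ω => r n * ((m : ℝ)⁻¹ * ∑ i ∈ s, Z n i ω) with hX
    have hsummem : MemLp (fun ω => ∑ i ∈ s, Z n i ω) 2 (P n) := by
      have h := memLp_finset_sum' s (fun i (_ : i ∈ s) => hZ2 n i)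
      rwa [show (∑ i ∈ s, Z n i) = fun ω => ∑ i ∈ s, Z n i ω from funext fun ω => by simp] at h
    have hXmem : MemLp X 2 (P n) := by
      have := (hsummem.const_mul ((m : ℝ)⁻¹)).const_mul (r n)
      simpa [hX, mul_assoc] using this
    have hEsum : ∫ ω, (∑ i ∈ s, Z n i ω) ∂(P n) = (m : ℝ) * μ n := by
      rw [integral_finset_sum s fun i _ => (hZ2 n i).integrable one_le_two]
      simp [hmean, hcard]
    have hEX : ∫ a, X a ∂(P n) = r n * μ n := by
      rw [hX]
      rw [integral_const_mul, integral_const_mul, hEsum]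
      field_simp
    have hsub : ((fun ω i => Z n i ω) ⁻¹' B s) ⊆ {ω | ε ≤ |X ω - ∫ a, X a ∂(P n)|} := by
      intro ω hω
      simp only [hB, Set.mem_preimage, Set.mem_setOf_eq] at hω
      have : X ω - ∫ a, X a ∂(P n) = r n * ((m : ℝ)⁻¹ * ∑ i ∈ s, Z n i ω - μ n) := by
        rw [hEX, hX]; ring
      rw [Set.mem_setOf_eq, this]
      exact hω.le
    refine le_trans (measure_mono hsub) (le_trans (meas_ge_le_variance_div_sq hXmem hε) ?_)
    refine ENNReal.ofReal_le_ofReal ?_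
    have hvarX : variance X (P n) = (r n * (m : ℝ)⁻¹) ^ 2 *
        variance (fun ω => ∑ i ∈ s, Z n i ω) (P n) := by
      rw [show X = fun ω => (r n * (m : ℝ)⁻¹) * ∑ i ∈ s, Z n i ω from
        funext fun ω => by rw [hX]; ring]
      exact variance_const_mul _ _ _
    have hvsum : variance (fun ω => ∑ i ∈ s, Z n i ω) (P n)
        ≤ (s.card : ℝ) * ((K n + 1 : ℕ) : ℝ) * V n := by
      refine variance_sum_le s (fun i => Z n i) (fun i _ => hZ2 n i) (V n) hVnonneg
        (fun i _ => hvle i) (K n + 1) ?_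
      intro i _
      have hsubset : s.filter (fun j => covar (P n) (Z n i) (Z n j) ≠ 0)
          ⊆ insert i ((G n).neighborFinset i) := by
        intro j hj
        have hj' := (Finset.mem_filter.1 hj).2
        by_contra hcon
        simp only [Finset.mem_insert, SimpleGraph.mem_neighborFinset, not_or] at hcon
        exact hj' (hcov n i j (fun h => hcon.1 h.symm) (fun h => hcon.2 h))
      calc (s.filter (fun j => covar (P n) (Z n i) (Z n j) ≠ 0)).card
          ≤ (insert i ((G n).neighborFinset i)).card := Finset.card_le_card hsubset
        _ ≤ ((G n).neighborFinset i).card + 1 := Finset.card_insert_le _ _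
        _ ≤ K n + 1 := by
            have := hdeg n i
            rw [SimpleGraph.card_neighborFinset_eq_degree]
            omega
    -- numeric bound
    have hKR : (1 : ℝ) ≤ (K n : ℝ) := by exact_mod_cast hKpos n
    have hr2K : (r n) ^ 2 * (K n : ℝ) ≤ (n : ℝ) := hrK n
    have hnum : (r n * (m : ℝ)⁻¹) ^ 2 * ((s.card : ℝ) * ((K n : ℝ) + 1) * V n)
        ≤ 2 * k * V n := by
      rw [hcard]
      have hre : (r n * (m : ℝ)⁻¹) ^ 2 * ((m : ℝ) * ((K n : ℝ) + 1) * V n)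
          = ((r n) ^ 2 * ((K n : ℝ) + 1) * (m : ℝ)⁻¹) * V n := by
        field_simp
      rw [hre]
      refine mul_le_mul_of_nonneg_right ?_ hVnonneg
      rw [mul_inv_le_iff₀ (by linarith : (0 : ℝ) < (m : ℝ))]
      nlinarith [sq_nonneg (r n)]
    have : variance X (P n) ≤ 2 * k * V n := by
      rw [hvarX]
      refine le_trans (mul_le_mul_of_nonneg_left hvsum (sq_nonneg _)) ?_
      push_cast at hvsum hnum ⊢
      nlinarith [hnum, sq_nonneg (r n * (↑m)⁻¹)]
    gcongr
  -- decomposition over values of S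
  have hdecomp : {ω | ε < |r n * ((m : ℝ)⁻¹ * ∑ i ∈ S n ω, Z n i ω - μ n)|}
      ⊆ ⋃ s ∈ (Finset.univ : Finset (Finset (Fin n))),
        (S n ⁻¹' {s} ∩ (fun ω i => Z n i ω) ⁻¹' B s) := by
    intro ω hω
    refine Set.mem_iUnion₂.2 ⟨S n ω, Finset.mem_univ _, rfl, ?_⟩
    exact hω
  calc P n {ω | ε < |r n * ((m : ℝ)⁻¹ * ∑ i ∈ S n ω, Z n i ω - μ n)|}
      ≤ ∑ s ∈ (Finset.univ : Finset (Finset (Fin n))),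
          P n (S n ⁻¹' {s} ∩ (fun ω i => Z n i ω) ⁻¹' B s) :=
        le_trans (measure_mono hdecomp) (measure_biUnion_finset_le _ _)
    _ = ∑ s ∈ (Finset.univ : Finset (Finset (Fin n))),
          P n (S n ⁻¹' {s}) * P n ((fun ω i => Z n i ω) ⁻¹' B s) :=
        Finset.sum_congr rfl fun s _ =>
          (hSindep n).measure_inter_preimage_eq_mul _ _ MeasurableSpace.measurableSet_top (hBmeas s)
    _ ≤ ∑ s ∈ (Finset.univ : Finset (Finset (Fin n))),
          P n (S n ⁻¹' {s}) * ENNReal.ofReal ((2 * k * V n) / ε ^ 2) := by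
        refine Finset.sum_le_sum fun s _ => ?_
        by_cases hcard : s.card = m
        · exact mul_le_mul_right (hcheb s hcard) _
        · have hemp : S n ⁻¹' {s} = ∅ := by
            ext ω
            simp only [Set.mem_preimage, Set.mem_singleton_iff, Set.mem_empty_iff_false,
              iff_false]
            intro h
            exact hcard (h ▸ hScard n ω)
          simp [hemp]
    _ = (∑ s ∈ (Finset.univ : Finset (Finset (Fin n))), P n (S n ⁻¹' {s}))
          * ENNReal.ofReal ((2 * k * V n) / ε ^ 2) := by rw [Finset.sum_mul]
    _ ≤ 1 * ENNReal.ofReal ((2 * k * V n) / ε ^ 2) := by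
        refine mul_le_mul_left ?_ _
        have heq : ∑ s ∈ (Finset.univ : Finset (Finset (Fin n))), P n (S n ⁻¹' {s})
            = P n (⋃ s ∈ (Finset.univ : Finset (Finset (Fin n))), S n ⁻¹' {s}) := by
          refine (measure_biUnion_finset ?_ ?_).symm
          · intro s _ t _ hst
            refine Set.disjoint_left.2 fun ω h1 h2 => hst ?_
            simp only [Set.mem_preimage, Set.mem_singleton_iff] at h1 h2
            rw [← h1, ← h2]
          · intro s _
            exact hSmeas n MeasurableSpace.measurableSet_top
        rw [heq]
        exact prob_le_one
    _ = ENNReal.ofReal ((2 * k * V n) / ε ^ 2) := one_mul _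
end

section
/- Let (E, 𝓔) be a measurable space, let X₁, …, Xₙ : Ω → E be identically distributed random variables with common law ν, and let g : Ω × E → ℝ be a jointly measurable random function such that for each i, ω ↦ g(ω, Xᵢ(ω)) is integrable, ω ↦ ∫ g(ω, x) dν(x) is integrable, and g is independent of Xᵢ (i.e., the σ-algebra generated by ω ↦ g(ω, ·) is independent of σ(Xᵢ)). Let S be a random subset of {1, …, n}, almost surely nonempty, independent of the σ-algebra generated jointly by (X₁, …, Xₙ) and g. Then E[(1/|S|) · Σ_{i∈S} g(ω, Xᵢ(ω))] = E[∫ g(ω, x) dν(x)]; that is, the split-sample empirical process term (P_{S} − P)(g) has expectation exactly zero. (Random-function form of Lemma 1: evaluating a fitted function on a holdout fold chosen independently of the data, at points independent of the fitted function, yields an exactly unbiased estimate of its population mean; if the same data were used to fit g and to obtain predictions, this unbiasedness would fail.) -/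
/-!
STATEMENT 10 (Random-function form of Lemma 1):
(E, 𝓔) a measurable space, X₁, …, Xₙ : Ω → E identically distributed with
common law ν, and g : Ω × E → ℝ a jointly measurable random function such that
for each i, ω ↦ g(ω, Xᵢ(ω)) is integrable, ω ↦ ∫ g(ω, x) dν(x) is integrable,
and g is independent of Xᵢ (the σ-algebra generated by the random function
ω ↦ g(ω, ·) is independent of σ(Xᵢ)).  S a random subset of {1, …, n},
a.s. nonempty, independent of the σ-algebra generated jointly by (X₁, …, Xₙ)
and g.  Then E[(1/|S|) · Σ_{i∈S} g(ω, Xᵢ(ω))] = E[∫ g(ω, x) dν(x)].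

The random function is modelled in the standard way: `g ω x = G (θ ω) x`,
where `θ : Ω → Θ` is a random element of a measurable parameter space Θ (the
fitted model, e.g. the training data) and `G : Θ × E → ℝ` is jointly
measurable — so `g` is jointly measurable, the σ-algebra generated by the
random function `ω ↦ g (ω, ·)` is `σ(θ)`, and independence of `g` from `Xᵢ`
(resp. of `S` from `(X, g)`) is `IndepFun θ (X i)` (resp.
`IndepFun S ⟨θ, X⟩`).
-/

open MeasureTheory ProbabilityTheory

theorem unbiasedness_split_sample_empirical_process_random_function
    {Ω E Θ : Type*} [MeasurableSpace Ω] [MeasurableSpace E] [MeasurableSpace Θ]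
    {P : Measure Ω} [IsProbabilityMeasure P] (ν : Measure E)
    {n : ℕ} (X : Fin n → Ω → E)
    (hXmeas : ∀ i, Measurable (X i))
    (hXlaw : ∀ i, P.map (X i) = ν)
    -- the random function g ω x = G (θ ω) x, jointly measurable:
    (θ : Ω → Θ) (hθmeas : Measurable θ)
    (G : Θ × E → ℝ) (hGmeas : Measurable G)
    (g : Ω → E → ℝ) (hg : ∀ ω x, g ω x = G (θ ω, x))
    -- integrability of the holdout evaluations and of the population mean:
    (hint1 : ∀ i, Integrable (fun ω => g ω (X i ω)) P)
    (hint2 : Integrable (fun ω => ∫ x, g ω x ∂ν) P)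
    -- g is independent of each Xᵢ:
    (hgX : ∀ i, IndepFun θ (X i) P)
    -- S is a.s. nonempty and independent of (X₁, …, Xₙ) and g jointly:
    (S : Ω → Finset (Fin n)) (hSmeas : Measurable S)
    (hSne : ∀ᵐ ω ∂P, (S ω).Nonempty)
    (hSindep : IndepFun S (fun ω => (θ ω, fun i => X i ω)) P) :
    ∫ ω, ((S ω).card : ℝ)⁻¹ * ∑ i ∈ S ω, g ω (X i ω) ∂P
      = ∫ ω, ∫ x, g ω x ∂ν ∂P := by
  classical
  -- n = 0 is impossible since S is a.s. nonempty
  rcases Nat.eq_zero_or_pos n with hn | hn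
  · subst hn
    exfalso
    obtain ⟨ω, hω⟩ := hSne.exists
    obtain ⟨i, _⟩ := hω
    exact i.elim0
  have i0 : Fin n := ⟨0, hn⟩
  haveI hνP : IsProbabilityMeasure ν := by
    rw [← hXlaw i0]; exact Measure.isProbabilityMeasure_map (hXmeas i0).aemeasurable
  set μθ := P.map θ with hμθ
  have hpairmeas : ∀ i : Fin n, Measurable fun ω => (θ ω, X i ω) :=
    fun i => hθmeas.prodMk (hXmeas i)
  have hmap : ∀ i : Fin n, P.map (fun ω => (θ ω, X i ω)) = μθ.prod ν := by
    intro i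
    have h := (indepFun_iff_map_prod_eq_prod_map_map hθmeas.aemeasurable
      (hXmeas i).aemeasurable).mp (hgX i)
    rw [h, hXlaw i]
  have hGint : Integrable G (μθ.prod ν) := by
    rw [← hmap i0,
      integrable_map_measure hGmeas.aestronglyMeasurable (hpairmeas i0).aemeasurable]
    simpa [Function.comp_def, hg] using hint1 i0
  set M : ℝ := ∫ ω, ∫ x, G (θ ω, x) ∂ν ∂P with hM
  have lemA : ∀ i : Fin n, ∫ ω, G (θ ω, X i ω) ∂P = M := by
    intro i
    have h1 : ∫ ω, G (θ ω, X i ω) ∂P = ∫ p, G p ∂(μθ.prod ν) := by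
      rw [← hmap i, integral_map (hpairmeas i).aemeasurable hGmeas.aestronglyMeasurable]
    have h2 : ∫ p, G p ∂(μθ.prod ν) = ∫ a, ∫ x, G (a, x) ∂ν ∂μθ :=
      integral_prod _ hGint
    have h3 : ∫ a, ∫ x, G (a, x) ∂ν ∂μθ = M := by
      rw [hM, hμθ, integral_map hθmeas.aemeasurable]
      exact (hGmeas.stronglyMeasurable.integral_prod_right').aestronglyMeasurable
    rw [h1, h2, h3]
  -- indicator of the event {S = s} and split-fold average, as functions of ω
  set ind : Finset (Fin n) → Ω → ℝ := fun s ω => if S ω = s then 1 else 0 with hind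
  set hf : Finset (Fin n) → Ω → ℝ :=
    fun s ω => ((s.card : ℝ))⁻¹ * ∑ i ∈ s, G (θ ω, X i ω) with hhf
  have hfint : ∀ s : Finset (Fin n), Integrable (hf s) P := fun s =>
    (integrable_finset_sum s fun i _ => by simpa [hg] using hint1 i).const_mul _
  have hindmeas : ∀ s, Measurable (ind s) := fun s => by
    have hχ : Measurable (fun t : Finset (Fin n) => if t = s then (1 : ℝ) else 0) :=
      measurable_from_top
    exact hχ.comp hSmeas
  have hindint : ∀ s, Integrable (ind s) P := fun s =>
    (integrable_const (1 : ℝ)).mono' (hindmeas s).aestronglyMeasurable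
      (Filter.Eventually.of_forall fun ω => by
        by_cases hc : S ω = s <;> simp [hind, hc])
  have hprodint : ∀ s, Integrable (fun ω => ind s ω * hf s ω) P := fun s =>
    (hfint s).bdd_mul (c := 1) (hindmeas s).aestronglyMeasurable
      (Filter.Eventually.of_forall fun ω => by by_cases hc : S ω = s <;> simp [hind, hc])
  have hmul : ∀ s, ∫ ω, ind s ω * hf s ω ∂P
      = (∫ ω, ind s ω ∂P) * ∫ ω, hf s ω ∂P := by
    intro s
    have hφ : Measurable (fun p : Θ × (Fin n → E) =>
        ((s.card : ℝ))⁻¹ * ∑ i ∈ s, G (p.1, p.2 i)) :=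
      (Finset.measurable_sum s fun i _ =>
        hGmeas.comp (measurable_fst.prodMk
          ((measurable_pi_apply i).comp measurable_snd))).const_mul _
    have hχ : Measurable (fun t : Finset (Fin n) => if t = s then (1 : ℝ) else 0) :=
      measurable_from_top
    have hi : IndepFun (ind s) (hf s) P := hSindep.comp hχ hφ
    exact hi.integral_mul_eq_mul_integral (hindmeas s).aestronglyMeasurable (hfint s).aestronglyMeasurable
  have hfval : ∀ s : Finset (Fin n), s.Nonempty → ∫ ω, hf s ω ∂P = M := by
    intro s hs
    have hcard : ((s.card : ℝ)) ≠ 0 := Nat.cast_ne_zero.mpr hs.card_pos.ne'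
    rw [hhf]
    rw [MeasureTheory.integral_const_mul,
      integral_finset_sum s (fun i _ => by simpa [hg] using hint1 i),
      Finset.sum_congr rfl fun i _ => lemA i, Finset.sum_const, nsmul_eq_mul,
      ← mul_assoc, inv_mul_cancel₀ hcard, one_mul]
  have hind0 : ∫ ω, ind ∅ ω ∂P = 0 := by
    have h0 : (fun ω => ind ∅ ω) =ᵐ[P] fun _ => (0 : ℝ) := by
      filter_upwards [hSne] with ω hω
      simp [hind, hω.ne_empty]
    rw [integral_congr_ae h0, integral_zero]
  have hsumind : ∑ s : Finset (Fin n), ∫ ω, ind s ω ∂P = 1 := by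
    rw [← integral_finset_sum _ fun s _ => hindint s]
    have h1 : (fun ω => ∑ s : Finset (Fin n), ind s ω) = fun _ => (1 : ℝ) := by
      funext ω
      simp [hind, Finset.sum_ite_eq]
    rw [h1]
    simp
  simp only [hg]
  have hdecomp : (fun ω => ((S ω).card : ℝ)⁻¹ * ∑ i ∈ S ω, G (θ ω, X i ω))
      = fun ω => ∑ s : Finset (Fin n), ind s ω * hf s ω := by
    funext ω
    simp [hind, hhf, ite_mul, Finset.sum_ite_eq]
  rw [show (∫ ω, ((S ω).card : ℝ)⁻¹ * ∑ i ∈ S ω, G (θ ω, X i ω) ∂P)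
      = ∫ ω, ∑ s : Finset (Fin n), ind s ω * hf s ω ∂P from by rw [← hdecomp],
    integral_finset_sum _ fun s _ => hprodint s]
  have hterm : ∀ s : Finset (Fin n),
      ∫ ω, ind s ω * hf s ω ∂P = (∫ ω, ind s ω ∂P) * M := by
    intro s
    rcases s.eq_empty_or_nonempty with rfl | hs
    · rw [hmul ∅, hind0]; ring
    · rw [hmul s, hfval s hs]
  rw [Finset.sum_congr rfl fun s _ => hterm s, ← Finset.sum_mul, hsumind, one_mul]
end

section
/- Let Z₁, …, Zₙ be square-integrable real random variables on a common probability space with common mean E[Zᵢ] = 0 for all i, and suppose the number of correlated pairs — ordered pairs (i, j) with i ≠ j and Cov(Zᵢ, Zⱼ) ≠ 0 — is at most K. Let S be a random subset of {1, …, n} of fixed size m ≥ 1 that is independent of (Z₁, …, Zₙ). Then for every ε > 0, P(|(1/m) · Σ_{i∈S} Zᵢ| > ε) ≤ ((m + K)/(m² · ε²)) · max_{1≤i≤n} Var(Zᵢ). (Finite-sample tail bound for the split-sample empirical process term, obtained by combining Lemma 1 (exact unbiasedness under an as-independent split), Lemma 2 (the covariance-counting variance bound), and Chebyshev's inequality;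 this is the quantitative core of the proof of Theorem 1.) -/
/-!
STATEMENT 11 (Finite-sample Chebyshev tail bound for the split-sample
empirical process term):
Z₁, …, Zₙ square-integrable with common mean 0 and at most K correlated
ordered pairs; S a random subset of {1, …, n} of fixed size m ≥ 1 independent
of the vector (Z₁, …, Zₙ).  Then for every ε > 0,
P(|(1/m) · Σ_{i∈S} Zᵢ| > ε) ≤ ((m + K)/(m²·ε²)) · max_i Var(Zᵢ).
-/

open MeasureTheory ProbabilityTheory

theorem chebyshev_tail_bound_split_sample_empirical_process
    {Ω : Type*} [MeasurableSpace Ω] {P : Measure Ω} [IsProbabilityMeasure P]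
    {n : ℕ} (Z : Fin n → Ω → ℝ)
    (hZmeas : ∀ i, Measurable (Z i))
    (hZ2 : ∀ i, MemLp (Z i) 2 P)
    (hmean : ∀ i, ∫ ω, Z i ω ∂P = 0)
    (K : ℕ)
    (hK : Set.ncard {p : Fin n × Fin n |
        p.1 ≠ p.2 ∧ covar P (Z p.1) (Z p.2) ≠ 0} ≤ K)
    (m : ℕ) (hm : 1 ≤ m)
    (S : Ω → Finset (Fin n)) (hSmeas : Measurable S)
    (hScard : ∀ ω, (S ω).card = m)
    (hSindep : IndepFun S (fun ω i => Z i ω) P) :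
    ∀ ε > (0 : ℝ),
      (P {ω | ε < |(m : ℝ)⁻¹ * ∑ i ∈ S ω, Z i ω|}).toReal
        ≤ ((m + K : ℝ) / ((m : ℝ) ^ 2 * ε ^ 2)) * ⨆ i, variance (Z i) P := by
  intro ε hε
  -- the underlying space is nonempty
  have hΩ : Nonempty Ω := by
    by_contra h
    have hu : (Set.univ : Set Ω) = ∅ := Set.univ_eq_empty_iff.mpr (not_nonempty_iff.mp h)
    have h1 : P Set.univ = 1 := measure_univ
    rw [hu] at h1
    simp at h1
  obtain ⟨ω₀⟩ := hΩ
  have hn : Nonempty (Fin n) := by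
    have hSne : (S ω₀).Nonempty := Finset.card_pos.mp (by rw [hScard]; omega)
    exact ⟨hSne.choose⟩
  set M := ⨆ i, variance (Z i) P with hMdef
  have hbdd : BddAbove (Set.range fun i => variance (Z i) P) :=
    (Set.finite_range _).bddAbove
  have hMle : ∀ i, variance (Z i) P ≤ M := fun i => le_ciSup hbdd i
  have hM0 : 0 ≤ M := le_trans (variance_nonneg _ _) (hMle hn.some)
  -- second moments equal variances
  have hvar : ∀ i, ∫ ω, (Z i ω) ^ 2 ∂P = variance (Z i) P := by
    intro i
    rw [variance_eq_sub (hZ2 i), hmean i]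
    simp
  -- integrability of products
  have hsqint : ∀ i : Fin n, Integrable (fun ω => (Z i ω) ^ 2) P :=
    fun i => (hZ2 i).integrable_sq
  have hmulint : ∀ i j : Fin n, Integrable (fun ω => Z i ω * Z j ω) P := by
    intro i j
    have hg : Integrable (fun ω => ((Z i ω) ^ 2 + (Z j ω) ^ 2) / 2) P :=
      ((hsqint i).add (hsqint j)).div_const 2
    refine hg.mono' (((hZmeas i).mul (hZmeas j)).aestronglyMeasurable) ?_
    filter_upwards with ω
    rw [Real.norm_eq_abs, abs_mul]
    nlinarith [sq_nonneg (|Z i ω| - |Z j ω|), sq_abs (Z i ω), sq_abs (Z j ω),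
      abs_nonneg (Z i ω), abs_nonneg (Z j ω)]
  -- each product integral is at most M
  have hcle : ∀ i j : Fin n, ∫ ω, Z i ω * Z j ω ∂P ≤ M := by
    intro i j
    have hg : Integrable (fun ω => ((Z i ω) ^ 2 + (Z j ω) ^ 2) / 2) P :=
      ((hsqint i).add (hsqint j)).div_const 2
    have h1 : ∫ ω, Z i ω * Z j ω ∂P ≤ ∫ ω, ((Z i ω) ^ 2 + (Z j ω) ^ 2) / 2 ∂P := by
      refine integral_mono (hmulint i j) hg ?_
      intro ω
      nlinarith [sq_nonneg (Z i ω - Z j ω)]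
    have h2 : ∫ ω, ((Z i ω) ^ 2 + (Z j ω) ^ 2) / 2 ∂P
        = (variance (Z i) P + variance (Z j) P) / 2 := by
      rw [integral_div, integral_add (hsqint i) (hsqint j), hvar i, hvar j]
    rw [h2] at h1
    have := hMle i
    have := hMle j
    linarith
  -- covariance equals the product integral (means are zero)
  have hcc : ∀ i j : Fin n, covar P (Z i) (Z j) = ∫ ω, Z i ω * Z j ω ∂P := by
    intro i j
    unfold covar
    rw [hmean i, hmean j]
    simp
  -- the finset of correlated pairs
  set T : Finset (Fin n × Fin n) :=
    Finset.univ.filter (fun p : Fin n × Fin n =>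
      p.1 ≠ p.2 ∧ covar P (Z p.1) (Z p.2) ≠ 0) with hTdef
  have hTcard : T.card ≤ K := by
    have hset : {p : Fin n × Fin n |
        p.1 ≠ p.2 ∧ covar P (Z p.1) (Z p.2) ≠ 0} = ↑T := by
      ext p
      simp [hTdef]
    rw [hset, Set.ncard_coe_finset] at hK
    exact hK
  -- the deterministic sums
  have hF2 : ∀ s : Finset (Fin n), MemLp (fun ω => ∑ i ∈ s, Z i ω) 2 P :=
    fun s => memLp_finset_sum s (fun i _ => hZ2 i)
  -- bound on the second moment of a deterministic sum of size m
  have hBle : ∀ s : Finset (Fin n), s.card = m →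
      ∫ ω, (∑ i ∈ s, Z i ω) ^ 2 ∂P ≤ ((m : ℝ) + K) * M := by
    intro s hs
    have hexp : ∀ ω, (∑ i ∈ s, Z i ω) ^ 2 = ∑ p ∈ s ×ˢ s, Z p.1 ω * Z p.2 ω := by
      intro ω
      rw [sq, Finset.sum_mul_sum, ← Finset.sum_product']
    have hint : ∫ ω, (∑ i ∈ s, Z i ω) ^ 2 ∂P
        = ∑ p ∈ s ×ˢ s, ∫ ω, Z p.1 ω * Z p.2 ω ∂P := by
      simp_rw [hexp]
      exact integral_finset_sum _ (fun p _ => hmulint p.1 p.2)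
    rw [hint, ← Finset.diag_union_offDiag s,
      Finset.sum_union (Finset.disjoint_diag_offDiag s)]
    have hdiag : ∑ p ∈ s.diag, ∫ ω, Z p.1 ω * Z p.2 ω ∂P ≤ (m : ℝ) * M := by
      calc ∑ p ∈ s.diag, ∫ ω, Z p.1 ω * Z p.2 ω ∂P
          ≤ s.diag.card • M :=
            Finset.sum_le_card_nsmul _ _ _ (fun p _ => hcle p.1 p.2)
        _ = (m : ℝ) * M := by
            rw [Finset.diag_card, hs, nsmul_eq_mul]
    have hoff : ∑ p ∈ s.offDiag, ∫ ω, Z p.1 ω * Z p.2 ω ∂P ≤ (K : ℝ) * M := by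
      rw [← Finset.sum_filter_ne_zero]
      have hsub : s.offDiag.filter
          (fun p => ∫ ω, Z p.1 ω * Z p.2 ω ∂P ≠ 0) ⊆ T := by
        intro p hp
        rw [Finset.mem_filter] at hp
        obtain ⟨hpo, hpne⟩ := hp
        rw [Finset.mem_offDiag] at hpo
        rw [hTdef, Finset.mem_filter]
        refine ⟨Finset.mem_univ _, hpo.2.2, ?_⟩
        rw [hcc]
        exact hpne
      calc ∑ p ∈ s.offDiag.filter (fun p => ∫ ω, Z p.1 ω * Z p.2 ω ∂P ≠ 0),
            ∫ ω, Z p.1 ω * Z p.2 ω ∂P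
          ≤ (s.offDiag.filter (fun p => ∫ ω, Z p.1 ω * Z p.2 ω ∂P ≠ 0)).card • M :=
            Finset.sum_le_card_nsmul _ _ _ (fun p _ => hcle p.1 p.2)
        _ ≤ (K : ℝ) * M := by
            rw [nsmul_eq_mul]
            refine mul_le_mul_of_nonneg_right ?_ hM0
            exact_mod_cast le_trans (Finset.card_le_card hsub) hTcard
    linarith
  -- decomposition of the squared statistic
  set Y : Ω → ℝ := fun ω => ∑ i ∈ S ω, Z i ω with hYdef
  have hpt : ∀ ω, (Y ω) ^ 2
      = ∑ s : Finset (Fin n),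
          (S ⁻¹' {s}).indicator (fun _ => (1 : ℝ)) ω * (∑ i ∈ s, Z i ω) ^ 2 := by
    intro ω
    rw [Finset.sum_eq_single (S ω)]
    · simp [Set.indicator_apply, hYdef]
    · intro s _ hne
      simp [Set.indicator_apply, Ne.symm hne]
    · simp
  have hmeas_pre : ∀ s : Finset (Fin n), MeasurableSet (S ⁻¹' {s}) :=
    fun s => hSmeas MeasurableSpace.measurableSet_top
  have hterm_int : ∀ s : Finset (Fin n),
      Integrable (fun ω =>
        (S ⁻¹' {s}).indicator (fun _ => (1 : ℝ)) ω * (∑ i ∈ s, Z i ω) ^ 2) P := by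
    intro s
    have heq : (fun ω =>
        (S ⁻¹' {s}).indicator (fun _ => (1 : ℝ)) ω * (∑ i ∈ s, Z i ω) ^ 2)
        = (S ⁻¹' {s}).indicator (fun ω => (∑ i ∈ s, Z i ω) ^ 2) := by
      funext ω
      by_cases h : ω ∈ S ⁻¹' {s} <;> simp [Set.indicator_apply, h]
    rw [heq]
    exact ((hF2 s).integrable_sq).indicator (hmeas_pre s)
  have hY2int : Integrable (fun ω => (Y ω) ^ 2) P := by
    have heq : (fun ω => (Y ω) ^ 2) = fun ω => ∑ s : Finset (Fin n),
        (S ⁻¹' {s}).indicator (fun _ => (1 : ℝ)) ω * (∑ i ∈ s, Z i ω) ^ 2 :=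
      funext hpt
    rw [heq]
    exact integrable_finset_sum _ (fun s _ => hterm_int s)
  -- factor each term using independence
  have hterm_eq : ∀ s : Finset (Fin n),
      ∫ ω, (S ⁻¹' {s}).indicator (fun _ => (1 : ℝ)) ω * (∑ i ∈ s, Z i ω) ^ 2 ∂P
        = (P (S ⁻¹' {s})).toReal * ∫ ω, (∑ i ∈ s, Z i ω) ^ 2 ∂P := by
    intro s
    have hφ : Measurable (fun t : Finset (Fin n) => if t = s then (1 : ℝ) else 0) :=
      measurable_from_top
    have hψ : Measurable (fun v : Fin n → ℝ => (∑ i ∈ s, v i) ^ 2) := by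
      exact (Finset.measurable_sum s (fun i _ => measurable_pi_apply i)).pow_const 2
    have hVmeas : Measurable (fun ω i => Z i ω) :=
      measurable_pi_lambda _ (fun i => hZmeas i)
    have hind : IndepFun
        ((fun t : Finset (Fin n) => if t = s then (1 : ℝ) else 0) ∘ S)
        ((fun v : Fin n → ℝ => (∑ i ∈ s, v i) ^ 2) ∘ (fun ω i => Z i ω)) P :=
      hSindep.comp hφ hψ
    have hmul := hind.integral_mul_eq_mul_integral
      ((hφ.comp hSmeas).aestronglyMeasurable)
      ((hψ.comp hVmeas).aestronglyMeasurable)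
    have h1 : ∫ ω, (S ⁻¹' {s}).indicator (fun _ => (1 : ℝ)) ω * (∑ i ∈ s, Z i ω) ^ 2 ∂P
        = ∫ ω, (((fun t : Finset (Fin n) => if t = s then (1 : ℝ) else 0) ∘ S) *
            ((fun v : Fin n → ℝ => (∑ i ∈ s, v i) ^ 2) ∘ (fun ω i => Z i ω))) ω ∂P := by
      congr 1
      funext ω
      by_cases h : S ω = s <;>
        simp [Set.indicator_apply, Function.comp, h]
    have h2 : ∫ ω, ((fun t : Finset (Fin n) => if t = s then (1 : ℝ) else 0) ∘ S) ω ∂P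
        = (P (S ⁻¹' {s})).toReal := by
      have : ((fun t : Finset (Fin n) => if t = s then (1 : ℝ) else 0) ∘ S)
          = (S ⁻¹' {s}).indicator (fun _ => (1 : ℝ)) := by
        funext ω
        by_cases h : S ω = s <;>
          simp [Set.indicator_apply, Function.comp, h]
      rw [this, integral_indicator_const (1 : ℝ) (hmeas_pre s)]
      simp [measureReal_def]
    rw [h1, hmul, h2]
    rfl
  -- total second moment bound
  have hPsum : ∑ s : Finset (Fin n), (P (S ⁻¹' {s})).toReal = 1 := by
    have hdisj : (↑(Finset.univ : Finset (Finset (Fin n))) : Set (Finset (Fin n))).PairwiseDisjoint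
        (fun s => S ⁻¹' {s}) := by
      intro s _ t _ hst
      refine Set.disjoint_left.mpr ?_
      intro ω hωs hωt
      simp only [Set.mem_preimage, Set.mem_singleton_iff] at hωs hωt
      exact hst (hωs ▸ hωt ▸ rfl)
    have hsum : ∑ s : Finset (Fin n), P (S ⁻¹' {s}) = 1 := by
      rw [← measure_biUnion_finset hdisj (fun s _ => hmeas_pre s)]
      have : ⋃ s ∈ (Finset.univ : Finset (Finset (Fin n))), S ⁻¹' {s} = Set.univ := by
        ext ω
        simp
      rw [this, measure_univ]
    rw [← ENNReal.toReal_sum (fun s _ => measure_ne_top _ _), hsum]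
    simp
  have hEY2 : ∫ ω, (Y ω) ^ 2 ∂P ≤ ((m : ℝ) + K) * M := by
    have h1 : ∫ ω, (Y ω) ^ 2 ∂P = ∑ s : Finset (Fin n),
        (P (S ⁻¹' {s})).toReal * ∫ ω, (∑ i ∈ s, Z i ω) ^ 2 ∂P := by
      calc ∫ ω, (Y ω) ^ 2 ∂P
          = ∫ ω, ∑ s : Finset (Fin n),
              (S ⁻¹' {s}).indicator (fun _ => (1 : ℝ)) ω * (∑ i ∈ s, Z i ω) ^ 2 ∂P := by
            congr 1; funext ω; exact hpt ω
        _ = ∑ s : Finset (Fin n),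
              ∫ ω, (S ⁻¹' {s}).indicator (fun _ => (1 : ℝ)) ω * (∑ i ∈ s, Z i ω) ^ 2 ∂P :=
            integral_finset_sum _ (fun s _ => hterm_int s)
        _ = ∑ s : Finset (Fin n),
              (P (S ⁻¹' {s})).toReal * ∫ ω, (∑ i ∈ s, Z i ω) ^ 2 ∂P :=
            Finset.sum_congr rfl (fun s _ => hterm_eq s)
    rw [h1]
    calc ∑ s : Finset (Fin n),
          (P (S ⁻¹' {s})).toReal * ∫ ω, (∑ i ∈ s, Z i ω) ^ 2 ∂P
        ≤ ∑ s : Finset (Fin n), (P (S ⁻¹' {s})).toReal * (((m : ℝ) + K) * M) := by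
          refine Finset.sum_le_sum ?_
          intro s _
          by_cases hcard : s.card = m
          · exact mul_le_mul_of_nonneg_left (hBle s hcard) ENNReal.toReal_nonneg
          · have hempty : S ⁻¹' {s} = ∅ := by
              ext ω
              simp only [Set.mem_preimage, Set.mem_singleton_iff, Set.mem_empty_iff_false,
                iff_false]
              intro h
              exact hcard (h ▸ hScard ω)
            simp [hempty]
      _ = (∑ s : Finset (Fin n), (P (S ⁻¹' {s})).toReal) * (((m : ℝ) + K) * M) := by
          rw [← Finset.sum_mul]
      _ = ((m : ℝ) + K) * M := by rw [hPsum, one_mul]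
  -- Chebyshev step
  have hmpos : (0 : ℝ) < m := by
    have : (1 : ℕ) ≤ m := hm
    exact_mod_cast Nat.lt_of_lt_of_le Nat.zero_lt_one this
  have hapos : (0 : ℝ) < ((m : ℝ) * ε) ^ 2 := by positivity
  have hsub : {ω | ε < |(m : ℝ)⁻¹ * ∑ i ∈ S ω, Z i ω|}
      ⊆ {ω | ((m : ℝ) * ε) ^ 2 ≤ (Y ω) ^ 2} := by
    intro ω hω
    simp only [Set.mem_setOf_eq] at hω ⊢
    have habs : |(m : ℝ)⁻¹ * ∑ i ∈ S ω, Z i ω| = (m : ℝ)⁻¹ * |Y ω| := by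
      rw [abs_mul, abs_inv, abs_of_pos hmpos, hYdef]
    rw [habs] at hω
    have h1 : (m : ℝ) * ε < |Y ω| := by
      have := mul_lt_mul_of_pos_left hω hmpos
      rwa [← mul_assoc, mul_inv_cancel₀ (ne_of_gt hmpos), one_mul] at this
    nlinarith [sq_abs (Y ω), abs_nonneg (Y ω), mul_pos hmpos hε]
  have hmarkov := mul_meas_ge_le_integral_of_nonneg
    (f := fun ω => (Y ω) ^ 2) (ae_of_all _ fun ω => sq_nonneg _) hY2int (((m : ℝ) * ε) ^ 2)
  have hmono : (P {ω | ε < |(m : ℝ)⁻¹ * ∑ i ∈ S ω, Z i ω|}).toReal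
      ≤ (P {ω | ((m : ℝ) * ε) ^ 2 ≤ (Y ω) ^ 2}).toReal :=
    ENNReal.toReal_mono (measure_ne_top _ _) (measure_mono hsub)
  calc (P {ω | ε < |(m : ℝ)⁻¹ * ∑ i ∈ S ω, Z i ω|}).toReal
      ≤ (P {ω | ((m : ℝ) * ε) ^ 2 ≤ (Y ω) ^ 2}).toReal := hmono
    _ ≤ (∫ ω, (Y ω) ^ 2 ∂P) / ((m : ℝ) * ε) ^ 2 := by
        rw [le_div_iff₀ hapos]
        rw [measureReal_def] at hmarkov
        linarith [hmarkov]
    _ ≤ (((m : ℝ) + K) * M) / ((m : ℝ) * ε) ^ 2 := by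
        gcongr
    _ = ((m : ℝ) + K) / ((m : ℝ) ^ 2 * ε ^ 2) * M := by
        rw [mul_pow]
        ring
end
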